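/- arXiv:2605.15117 — 5 statements merged into one kernel-verified Lean document; each statement's English description precedes it below -/
import Mathlib

section
/- The image of ℝ ∖ ℤ_{≤0} under the Gamma function equals ℝ ∖ {0}; equivalently, letting 𝒱 denote the x-axis in ℝ², one has G(𝒱 ∩ (ℝ² ∖ S)) = {(x, 0) ∈ ℝ² : x ∈ ℝ, x ≠ 0}. -/
open Set

open Finset Nat

lemma gamma_shift (n : ℕ) : ∀ x : ℝ, (∀ j : ℕ, j < n → x + j ≠ 0) →
    Real.Gamma (x + n) = (∏ j ∈ Finset.range n, (x + j)) * Real.Gamma x := by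
  induction n with
  | zero => simp
  | succ n ih =>
    intro x hx
    have h1 : x + ((n + 1 : ℕ) : ℝ) = (x + n) + 1 := by push_cast; ring
    rw [h1, Real.Gamma_add_one (hx n (Nat.lt_succ_self n)),
      ih x (fun j hj => hx j (by omega)), Finset.prod_range_succ]
    ring

lemma gamma_neg_eq (n : ℕ) (ε : ℝ) (hε : 0 < ε) (hε1 : ε < 1) :
    Real.Gamma (1 - n - ε) =
      (-1 : ℝ) ^ n * Real.Gamma (1 - ε) / ∏ i ∈ Finset.range n, ((i : ℝ) + ε) := by
  have hx : ∀ j : ℕ, j < n → (1 - (n : ℝ) - ε) + j ≠ 0 := by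
    intro j hj
    have hjn : (j : ℝ) + 1 ≤ n := by exact_mod_cast hj
    intro h; nlinarith
  have h := gamma_shift n (1 - (n : ℝ) - ε) hx
  have h2 : (1 - (n : ℝ) - ε) + n = 1 - ε := by ring
  rw [h2] at h
  have hprod : (∏ j ∈ Finset.range n, ((1 - (n : ℝ) - ε) + j))
      = (-1 : ℝ) ^ n * ∏ i ∈ Finset.range n, ((i : ℝ) + ε) := by
    calc (∏ j ∈ Finset.range n, ((1 - (n : ℝ) - ε) + j))
        = ∏ j ∈ Finset.range n, ((-1) * (((n - 1 - j : ℕ) : ℝ) + ε)) := by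
          refine Finset.prod_congr rfl (fun j hj => ?_)
          rw [Finset.mem_range] at hj
          rw [Nat.cast_sub (by omega), Nat.cast_sub (by omega), Nat.cast_one]
          ring
      _ = (-1 : ℝ) ^ n * ∏ j ∈ Finset.range n, (((n - 1 - j : ℕ) : ℝ) + ε) := by
          rw [Finset.prod_mul_distrib, Finset.prod_const, Finset.card_range]
      _ = (-1 : ℝ) ^ n * ∏ i ∈ Finset.range n, ((i : ℝ) + ε) := by
          rw [Finset.prod_range_reflect (fun i => (i : ℝ) + ε) n]
  have hP : 0 < ∏ i ∈ Finset.range n, ((i : ℝ) + ε) :=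
    Finset.prod_pos (fun i _ => by positivity)
  rw [hprod] at h
  have hsq : (-1 : ℝ) ^ n * (-1 : ℝ) ^ n = 1 := by
    rw [← pow_add]; exact Even.neg_one_pow ⟨n, rfl⟩
  rw [h, ← mul_assoc, ← mul_assoc, hsq, one_mul,
    mul_comm (∏ i ∈ Finset.range n, ((i : ℝ) + ε)) (Real.Gamma (1 - (n:ℝ) - ε)),
    mul_div_assoc, div_self hP.ne', mul_one]


lemma prod_upper (ε : ℝ) (hε : 0 ≤ ε) (hε1 : ε ≤ 1) :
    ∀ n : ℕ, 1 ≤ n → ∏ i ∈ Finset.range n, ((i : ℝ) + ε) ≤ ε * n ! := by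
  intro n hn
  induction n, hn using Nat.le_induction with
  | base => simp
  | succ n hn ih =>
    rw [Finset.prod_range_succ]
    have hP : 0 ≤ ∏ i ∈ Finset.range n, ((i : ℝ) + ε) :=
      Finset.prod_nonneg (fun i _ => by positivity)
    have hfac : (0 : ℝ) < n ! := by exact_mod_cast Nat.factorial_pos n
    have hcast : ((n + 1)! : ℝ) = ((n : ℝ) + 1) * n ! := by
      rw [Nat.factorial_succ]; push_cast; ring
    rw [hcast]
    nlinarith

lemma prod_lower : ∀ n : ℕ, 2 ≤ n →
    ((n : ℝ) - 1) / 2 ≤ ∏ i ∈ Finset.range n, ((i : ℝ) + 1 / 2) := by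
  intro n hn
  induction n, hn using Nat.le_induction with
  | base => norm_num [Finset.prod_range_succ]
  | succ n hn ih =>
    rw [Finset.prod_range_succ]
    have hn' : (2 : ℝ) ≤ n := by exact_mod_cast hn
    push_cast
    nlinarith

lemma continuousOn_gamma {s : Set ℝ} (h : ∀ x ∈ s, ∀ k : ℤ, k ≤ 0 → x ≠ (k : ℝ)) :
    ContinuousOn Real.Gamma s := by
  intro x hx
  refine (Real.differentiableAt_Gamma (fun m => ?_)).continuousAt.continuousWithinAt
  have := h x hx (-(m : ℤ)) (by omega)
  simpa using this

lemma gamma_core (y : ℝ) (hy : 0 < y) (n : ℕ) (hn : 2 ≤ n)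
    (hbig : Real.Gamma (1 / 2) / (((n : ℝ) - 1) / 2) ≤ y) :
    ∃ x : ℝ, (∀ k : ℤ, k ≤ 0 → x ≠ (k : ℝ)) ∧ Real.Gamma x = (-1) ^ n * y := by
  -- minimum of Γ on [1,2]
  have hIcc : ∀ x ∈ Icc (1 : ℝ) 2, ∀ k : ℤ, k ≤ 0 → x ≠ (k : ℝ) := by
    intro x hx k hk hxk
    have h1 : (k : ℝ) ≤ 0 := by exact_mod_cast hk
    have := hx.1; linarith [hxk ▸ this]
  obtain ⟨t, ht, hmin⟩ := isCompact_Icc.exists_isMinOn (nonempty_Icc.mpr one_le_two)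
    (continuousOn_gamma hIcc)
  set c := Real.Gamma t with hc_def
  have hc : 0 < c := Real.Gamma_pos_of_pos (by linarith [ht.1])
  have hfac : (0 : ℝ) < n ! := by exact_mod_cast Nat.factorial_pos n
  set ε : ℝ := min (1 / 4) (c / (y * n !)) with hε_def
  have hε : 0 < ε := lt_min (by norm_num) (by positivity)
  have hε4 : ε ≤ 1 / 4 := min_le_left _ _
  set a : ℝ := 1 - n - 1 / 2 with ha_def
  set b : ℝ := 1 - n - ε with hb_def
  have hab : a ≤ b := by rw [ha_def, hb_def]; linarith
  -- values of Γ at a and b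
  have hPa : 0 < ∏ i ∈ Finset.range n, ((i : ℝ) + 1 / 2) :=
    Finset.prod_pos (fun i _ => by positivity)
  have hPb : 0 < ∏ i ∈ Finset.range n, ((i : ℝ) + ε) :=
    Finset.prod_pos (fun i _ => by positivity)
  have hΓa := gamma_neg_eq n (1 / 2) (by norm_num) (by norm_num)
  have hΓb := gamma_neg_eq n ε hε (by linarith)
  -- Γ(1/2)/Pa ≤ y
  have hbound1 : Real.Gamma (1 / 2) / ∏ i ∈ Finset.range n, ((i : ℝ) + 1 / 2) ≤ y := by
    have hl := prod_lower n hn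
    have h2 : (0 : ℝ) < ((n : ℝ) - 1) / 2 := by
      have : (2 : ℝ) ≤ n := by exact_mod_cast hn
      linarith
    have hΓh : 0 < Real.Gamma (1 / 2) := Real.Gamma_pos_of_pos (by norm_num)
    calc Real.Gamma (1 / 2) / ∏ i ∈ Finset.range n, ((i : ℝ) + 1 / 2)
        ≤ Real.Gamma (1 / 2) / (((n : ℝ) - 1) / 2) :=
          div_le_div_of_nonneg_left hΓh.le h2 hl
      _ ≤ y := hbig
  -- y ≤ Γ(1-ε)/Pb
  have hbound2 : y ≤ Real.Gamma (1 - ε) / ∏ i ∈ Finset.range n, ((i : ℝ) + ε) := by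
    have h1ε : (0 : ℝ) < 1 - ε := by linarith
    have hΓ1ε : 0 < Real.Gamma (1 - ε) := Real.Gamma_pos_of_pos h1ε
    have hcle : c ≤ Real.Gamma (1 - ε) := by
      have hmem : (1 - ε) + 1 ∈ Icc (1 : ℝ) 2 := by constructor <;> [linarith; linarith]
      have h2 : c ≤ Real.Gamma ((1 - ε) + 1) := hmin hmem
      rw [Real.Gamma_add_one h1ε.ne'] at h2
      nlinarith
    have hPle : (∏ i ∈ Finset.range n, ((i : ℝ) + ε)) ≤ c / y := by
      have h1 := prod_upper ε hε.le (by linarith) n (by omega)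
      have h2 : ε ≤ c / (y * n !) := min_le_right _ _
      have h3 : ε * (n ! : ℝ) ≤ (c / (y * n !)) * n ! :=
        mul_le_mul_of_nonneg_right h2 hfac.le
      have h4 : (c / (y * (n ! : ℝ))) * n ! = c / y := by
        field_simp
      rw [h4] at h3
      linarith
    rw [le_div_iff₀ hPb]
    calc y * ∏ i ∈ Finset.range n, ((i : ℝ) + ε) ≤ y * (c / y) := by nlinarith
      _ = c := by field_simp
      _ ≤ Real.Gamma (1 - ε) := hcle
  -- no poles on [a, b]
  have hnopole : ∀ x ∈ Icc a b, ∀ k : ℤ, k ≤ 0 → x ≠ (k : ℝ) := by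
    rintro x hx k _ rfl
    have h1 : (1 : ℝ) - n - 1 / 2 ≤ k := hx.1
    have h2 : (k : ℝ) ≤ 1 - n - ε := hx.2
    have h3 : (-(n : ℤ) : ℝ) < k := by push_cast; linarith
    have h4 : ((k : ℝ)) < ((1 : ℤ) - n : ℤ) := by push_cast; linarith
    have h5 : -(n : ℤ) < k := by exact_mod_cast h3
    have h6 : k < 1 - (n : ℤ) := by exact_mod_cast h4
    omega
  have hcont : ContinuousOn Real.Gamma (Icc a b) := continuousOn_gamma hnopole
  -- IVT
  have hmem : (-1 : ℝ) ^ n * y ∈ uIcc (Real.Gamma a) (Real.Gamma b) := by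
    have h12 : (1 : ℝ) - 1 / 2 = 1 / 2 := by norm_num
    rcases Nat.even_or_odd n with he | ho
    · have hs : (-1 : ℝ) ^ n = 1 := he.neg_one_pow
      rw [Set.mem_uIcc]; left
      rw [ha_def, hb_def, hΓa, hΓb, hs, h12]
      constructor <;> simp only [one_mul] <;> linarith
    · have hs : (-1 : ℝ) ^ n = -1 := ho.neg_one_pow
      rw [Set.mem_uIcc]; right
      rw [ha_def, hb_def, hΓa, hΓb, hs, h12]
      constructor <;> simp only [neg_one_mul, neg_div] <;> linarith
  have hsub := intermediate_value_uIcc (hcont.mono (by rw [uIcc_of_le hab]))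
  obtain ⟨x, hx, hΓx⟩ := hsub hmem
  rw [uIcc_of_le hab] at hx
  exact ⟨x, hnopole x hx, hΓx⟩

lemma gamma_surj (y : ℝ) (hy : y ≠ 0) :
    ∃ x : ℝ, (∀ k : ℤ, k ≤ 0 → x ≠ (k : ℝ)) ∧ Real.Gamma x = y := by
  have hΓh : 0 < Real.Gamma (1 / 2) := Real.Gamma_pos_of_pos (by norm_num)
  rcases hy.lt_or_gt with hneg | hpos
  · obtain ⟨N, hN⟩ := exists_nat_ge (Real.Gamma (1 / 2) / (-y) + 2)
    set n := 2 * N + 3 with hn_def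
    have hn : 2 ≤ n := by omega
    have hodd : Odd n := ⟨N + 1, by omega⟩
    have hcast : ((n : ℝ) - 1) / 2 = (N : ℝ) + 1 := by
      rw [hn_def]; push_cast; ring
    have hbig : Real.Gamma (1 / 2) / (((n : ℝ) - 1) / 2) ≤ -y := by
      have h1 : Real.Gamma (1 / 2) / (-y) ≤ (N : ℝ) + 1 := by linarith
      rw [div_le_iff₀ (by linarith : (0 : ℝ) < -y)] at h1
      rw [hcast, div_le_iff₀ (by positivity)]
      linarith
    obtain ⟨x, hx, hΓx⟩ := gamma_core (-y) (by linarith) n hn hbig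
    exact ⟨x, hx, by rw [hΓx, hodd.neg_one_pow]; ring⟩
  · obtain ⟨N, hN⟩ := exists_nat_ge (Real.Gamma (1 / 2) / y + 2)
    set n := 2 * N + 2 with hn_def
    have hn : 2 ≤ n := by omega
    have heven : Even n := ⟨N + 1, by omega⟩
    have hcast : ((n : ℝ) - 1) / 2 = (N : ℝ) + 1 / 2 := by
      rw [hn_def]; push_cast; ring
    have hbig : Real.Gamma (1 / 2) / (((n : ℝ) - 1) / 2) ≤ y := by
      have h1 : Real.Gamma (1 / 2) / y ≤ (N : ℝ) + 1 / 2 := by linarith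
      rw [div_le_iff₀ hpos] at h1
      rw [hcast, div_le_iff₀ (by positivity)]
      linarith
    obtain ⟨x, hx, hΓx⟩ := gamma_core y hpos n hn hbig
    exact ⟨x, hx, by rw [hΓx, heven.neg_one_pow, one_mul]⟩

/-- The map `G : ℝ² → ℝ²` given by `(x, y) ↦ (Re Γ(x+iy), Im Γ(x+iy))`. -/
noncomputable def G (p : ℝ × ℝ) : ℝ × ℝ :=
  ((Complex.Gamma ((p.1 : ℂ) + (p.2 : ℂ) * Complex.I)).re,
   (Complex.Gamma ((p.1 : ℂ) + (p.2 : ℂ) * Complex.I)).im)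

/-- The set `S = ℤ_{≤0} × {0} ⊆ ℝ²`. -/
def S : Set (ℝ × ℝ) := {p | (∃ k : ℤ, k ≤ 0 ∧ p.1 = (k : ℝ)) ∧ p.2 = 0}

/-- The image of `ℝ ∖ ℤ_{≤0}` under the (real) Gamma function is `ℝ ∖ {0}`;
equivalently, the image of the `x`-axis under `G` is `{(x, 0) : x ≠ 0}`. -/
theorem image_of_x_axis :
    Real.Gamma '' {x : ℝ | ∀ k : ℤ, k ≤ 0 → x ≠ (k : ℝ)} = {y : ℝ | y ≠ 0} ∧
    G '' ({p : ℝ × ℝ | p.2 = 0} ∩ Sᶜ) = {p : ℝ × ℝ | p.1 ≠ 0 ∧ p.2 = 0} := by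
  constructor
  · ext y
    simp only [mem_image, mem_setOf_eq]
    constructor
    · rintro ⟨x, hx, rfl⟩
      refine Real.Gamma_ne_zero fun m => ?_
      have := hx (-(m : ℤ)) (by omega)
      simpa using this
    · exact fun hy => gamma_surj y hy
  · ext p
    simp only [mem_image, mem_inter_iff, mem_setOf_eq, mem_compl_iff]
    constructor
    · rintro ⟨q, ⟨hq2, hqS⟩, rfl⟩
      have hq1 : ∀ k : ℤ, k ≤ 0 → q.1 ≠ (k : ℝ) := fun k hk hqk =>
        hqS ⟨⟨k, hk, hqk⟩, hq2⟩
      have hG : G q = (Real.Gamma q.1, 0) := by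
        simp only [G, hq2]
        rw [Complex.ofReal_zero, zero_mul, add_zero, Complex.Gamma_ofReal]
        simp
      rw [hG]
      refine ⟨Real.Gamma_ne_zero fun m => ?_, rfl⟩
      have := hq1 (-(m : ℤ)) (by omega)
      simpa using this
    · rintro ⟨hp1, hp2⟩
      obtain ⟨x, hx, hΓx⟩ := gamma_surj p.1 hp1
      refine ⟨(x, 0), ⟨rfl, fun hS => ?_⟩, ?_⟩
      · obtain ⟨⟨k, hk, hxk⟩, -⟩ := hS
        exact hx k hk hxk
      · show G (x, 0) = p
        simp only [G]
        rw [Complex.ofReal_zero, zero_mul, add_zero, Complex.Gamma_ofReal]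
        have : p = (p.1, p.2) := rfl
        rw [this]
        simp [hΓx, hp2]
end

section
/- Let P ∈ ℝ[X, Y] be an irreducible polynomial whose zero locus in ℝ² is infinite. Then P is also irreducible in ℂ[X, Y]. -/
open MvPolynomial Set

noncomputable section AuxIrredOverC

namespace AuxIrredOverC

abbrev Rp : Type := Polynomial ℝ
abbrev Kp : Type := FractionRing Rp

lemma dvd_of_dvd_unit_mul {α : Type*} [CommMonoid α] {u a b : α} (hu : IsUnit u)
    (h : a ∣ u * b) : a ∣ b := by
  obtain ⟨v, rfl⟩ := hu
  exact Units.dvd_mul_left.mp h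

/-- Iterated-polynomial model of bivariate polynomials. -/
def E0 (k : Type*) [CommSemiring k] : MvPolynomial (Fin 1) k ≃ₐ[k] Polynomial k :=
  (MvPolynomial.finSuccEquiv k 0).trans
    (Polynomial.mapAlgEquiv (MvPolynomial.isEmptyAlgEquiv k (Fin 0)))

def E (k : Type*) [CommSemiring k] :
    MvPolynomial (Fin 2) k ≃ₐ[k] Polynomial (Polynomial k) :=
  (MvPolynomial.finSuccEquiv k 1).trans (Polynomial.mapAlgEquiv (E0 k))

lemma E_C (k : Type*) [CommSemiring k] (a : k) :
    E k (MvPolynomial.C a) = Polynomial.C (Polynomial.C a) := by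
  have h := (E k).commutes a
  rwa [MvPolynomial.algebraMap_eq, Polynomial.algebraMap_apply,
    Polynomial.algebraMap_apply, Algebra.algebraMap_self_apply] at h

lemma E_X0 (k : Type*) [CommSemiring k] :
    E k (MvPolynomial.X 0) = Polynomial.X := by
  simp [E, MvPolynomial.finSuccEquiv_X_zero]

lemma E_X1 (k : Type*) [CommSemiring k] :
    E k (MvPolynomial.X 1) = Polynomial.C Polynomial.X := by
  have h1 : (1 : Fin 2) = Fin.succ 0 := rfl
  have h2 : MvPolynomial.finSuccEquiv k 1 (MvPolynomial.X (Fin.succ 0)) =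
      Polynomial.C (MvPolynomial.X 0) := MvPolynomial.finSuccEquiv_X_succ
  rw [E, AlgEquiv.trans_apply, h1, h2]
  rw [congrFun (Polynomial.coe_mapAlgEquiv (E0 k)) (Polynomial.C (MvPolynomial.X 0)),
    Polynomial.map_C]
  congr 1
  show E0 k (MvPolynomial.X 0) = Polynomial.X
  rw [E0, AlgEquiv.trans_apply, MvPolynomial.finSuccEquiv_X_zero]
  rw [congrFun (Polynomial.coe_mapAlgEquiv (MvPolynomial.isEmptyAlgEquiv k (Fin 0)))
    Polynomial.X, Polynomial.map_X]

/-- Units of a bivariate polynomial ring over a field are the nonzero constants. -/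
lemma isUnit_elim {k : Type*} [Field k] {p : MvPolynomial (Fin 2) k} (hp : IsUnit p) :
    ∃ z : k, z ≠ 0 ∧ p = MvPolynomial.C z := by
  have h1 : IsUnit (E k p) := hp.map (E k)
  rw [Polynomial.isUnit_iff] at h1
  obtain ⟨r, hru, hrp⟩ := h1
  rw [Polynomial.isUnit_iff] at hru
  obtain ⟨z, hzu, hzr⟩ := hru
  refine ⟨z, hzu.ne_zero, ?_⟩
  have : E k p = E k (MvPolynomial.C z) := by rw [E_C, hzr, hrp]
  exact (E k).injective this

/-- Evaluation is compatible with `E`. -/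
lemma bridge (F : MvPolynomial (Fin 2) ℝ) (x y : ℝ) :
    MvPolynomial.eval ![x, y] F =
      Polynomial.eval x (Polynomial.map (Polynomial.evalRingHom y) (E ℝ F)) := by
  induction F using MvPolynomial.induction_on with
  | C a => simp [E_C]
  | add p q hp hq => simp [map_add, hp, hq]
  | mul_X p i hp =>
      have hX : Polynomial.eval x (Polynomial.map (Polynomial.evalRingHom y)
          (E ℝ (MvPolynomial.X i))) = (![x, y] : Fin 2 → ℝ) i := by
        fin_cases i
        · show Polynomial.eval x (Polynomial.map (Polynomial.evalRingHom y)
            (E ℝ (MvPolynomial.X 0))) = (![x, y] : Fin 2 → ℝ) 0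
          rw [E_X0]; simp
        · show Polynomial.eval x (Polynomial.map (Polynomial.evalRingHom y)
            (E ℝ (MvPolynomial.X 1))) = (![x, y] : Fin 2 → ℝ) 1
          rw [E_X1]; simp
      simp only [map_mul, Polynomial.map_mul, Polynomial.eval_mul, MvPolynomial.eval_mul,
        MvPolynomial.eval_X, hp, hX]

/-- The key finiteness theorem: two bivariate real polynomials (in iterated form) without a
common nonunit factor have finitely many common zeros. -/
lemma finpoly (F G : Polynomial (Polynomial ℝ)) (hF : F ≠ 0) (hG : G ≠ 0)
    (hco : ∀ D, D ∣ F → D ∣ G → IsUnit D) :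
    {p : ℝ × ℝ | ((F.map (Polynomial.evalRingHom p.2)).eval p.1 = 0) ∧
      ((G.map (Polynomial.evalRingHom p.2)).eval p.1 = 0)}.Finite := by
  classical
  have hinj : Function.Injective (algebraMap Rp Kp) := IsFractionRing.injective Rp Kp
  have hmapinj : Function.Injective
      (Polynomial.map (algebraMap Rp Kp) : Polynomial Rp → Polynomial Kp) :=
    Polynomial.map_injective _ hinj
  set f := F.map (algebraMap Rp Kp) with hf
  set g := G.map (algebraMap Rp Kp) with hg
  have hf0 : f ≠ 0 := fun h => hF (hmapinj (by simpa using h))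
  have hg0 : g ≠ 0 := fun h => hG (hmapinj (by simpa using h))
  -- coprimality over the fraction field
  have hcop : IsCoprime f g := by
    by_contra hnc
    set H := EuclideanDomain.gcd f g with hH
    have hHf : H ∣ f := EuclideanDomain.gcd_dvd_left _ _
    have hHg : H ∣ g := EuclideanDomain.gcd_dvd_right _ _
    have hHnu : ¬IsUnit H := fun h => hnc (EuclideanDomain.gcd_isUnit_iff.mp h)
    have hH0 : H ≠ 0 := fun h => hf0 (EuclideanDomain.gcd_eq_zero_iff.mp (hH ▸ h)).1
    obtain ⟨b, hb⟩ := IsLocalization.integerNormalization_map_to_map (nonZeroDivisors Rp) H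
    set H₀ := IsLocalization.integerNormalization (nonZeroDivisors Rp) H with hH₀
    have hbne : (algebraMap Rp Kp) (b : Rp) ≠ 0 := fun h =>
      (mem_nonZeroDivisors_iff_ne_zero.mp b.2) (hinj (by simpa using h))
    have hbsmul : (b : Rp) • H = Polynomial.C ((algebraMap Rp Kp) (b : Rp)) * H := by
      rw [Algebra.smul_def, Polynomial.algebraMap_apply]
    have hCbu : IsUnit (Polynomial.C ((algebraMap Rp Kp) (b : Rp))) :=
      Polynomial.isUnit_C.mpr (isUnit_iff_ne_zero.mpr hbne)
    have hH₀0 : H₀ ≠ 0 := by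
      intro h
      have : Polynomial.map (algebraMap Rp Kp) H₀ = 0 := by rw [h, Polynomial.map_zero]
      rw [hb, hbsmul] at this
      exact hH0 (by simpa [hbne] using mul_eq_zero.mp this)
    -- the primitive part of `H₀` divides both `F` and `G`
    have hdvd : ∀ (W : Polynomial Rp), W ≠ 0 → H ∣ W.map (algebraMap Rp Kp) →
        H₀.primPart ∣ W := by
      intro W hW0 hHW
      have h1 : H₀.primPart.map (algebraMap Rp Kp) ∣ W.primPart.map (algebraMap Rp Kp) := by
        have d1 : H₀.primPart.map (algebraMap Rp Kp) ∣ H₀.map (algebraMap Rp Kp) :=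
          Polynomial.map_dvd _ H₀.primPart_dvd
        rw [hb, hbsmul] at d1
        have d2 : H₀.primPart.map (algebraMap Rp Kp) ∣ W.map (algebraMap Rp Kp) := by
          have := d1.trans (mul_dvd_mul_left _ hHW)
          exact dvd_of_dvd_unit_mul hCbu this
        have hWc : W = Polynomial.C W.content * W.primPart := W.eq_C_content_mul_primPart
        have hWcne : (algebraMap Rp Kp) W.content ≠ 0 := fun h =>
          hW0 (Polynomial.content_eq_zero_iff.mp (hinj (by simpa using h)))
        have hCWu : IsUnit (Polynomial.C ((algebraMap Rp Kp) W.content)) :=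
          Polynomial.isUnit_C.mpr (isUnit_iff_ne_zero.mpr hWcne)
        rw [hWc] at d2
        rw [Polynomial.map_mul, Polynomial.map_C] at d2
        exact dvd_of_dvd_unit_mul hCWu d2
      have h2 : H₀.primPart ∣ W.primPart :=
        Polynomial.IsPrimitive.dvd_of_fraction_map_dvd_fraction_map
          H₀.isPrimitive_primPart h1
      exact h2.trans W.primPart_dvd
    have hHPF : H₀.primPart ∣ F := hdvd F hF hHf
    have hHPG : H₀.primPart ∣ G := hdvd G hG hHg
    have hu : IsUnit H₀.primPart := hco _ hHPF hHPG
    -- hence `H` is a unit, contradiction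
    have : IsUnit (H₀.map (algebraMap Rp Kp)) := by
      have h3 : H₀ = Polynomial.C H₀.content * H₀.primPart := H₀.eq_C_content_mul_primPart
      have hc0 : (algebraMap Rp Kp) H₀.content ≠ 0 := fun h =>
        hH₀0 (Polynomial.content_eq_zero_iff.mp (hinj (by simpa using h)))
      rw [h3, Polynomial.map_mul, Polynomial.map_C]
      exact (Polynomial.isUnit_C.mpr (isUnit_iff_ne_zero.mpr hc0)).mul
        (hu.map (Polynomial.mapRingHom (algebraMap Rp Kp)))
    rw [hb, hbsmul] at this
    exact hHnu (isUnit_of_mul_isUnit_right this)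
  -- Bezout: clear denominators
  obtain ⟨u, v, huv⟩ := hcop
  obtain ⟨bu, hbu⟩ := IsLocalization.integerNormalization_map_to_map (nonZeroDivisors Rp) u
  obtain ⟨bv, hbv⟩ := IsLocalization.integerNormalization_map_to_map (nonZeroDivisors Rp) v
  set u₀ := IsLocalization.integerNormalization (nonZeroDivisors Rp) u
  set v₀ := IsLocalization.integerNormalization (nonZeroDivisors Rp) v
  set d : Rp := (bu : Rp) * (bv : Rp) with hd
  have hd0 : d ≠ 0 :=
    mul_ne_zero (mem_nonZeroDivisors_iff_ne_zero.mp bu.2)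
      (mem_nonZeroDivisors_iff_ne_zero.mp bv.2)
  have eqn : Polynomial.C (bv : Rp) * u₀ * F + Polynomial.C (bu : Rp) * v₀ * G
      = Polynomial.C d := by
    apply hmapinj
    rw [Polynomial.map_add, Polynomial.map_mul, Polynomial.map_mul, Polynomial.map_mul,
      Polynomial.map_mul, Polynomial.map_C, Polynomial.map_C, hbu, hbv,
      Algebra.smul_def, Algebra.smul_def, Polynomial.algebraMap_apply,
      Polynomial.algebraMap_apply, Polynomial.map_C, hd, map_mul]
    push_cast
    ring_nf
    rw [Polynomial.C_mul]
    linear_combination (Polynomial.C ((algebraMap Rp Kp) (bu : Rp)) *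
      Polynomial.C ((algebraMap Rp Kp) (bv : Rp))) * huv
  -- now the finiteness argument
  set S := {p : ℝ × ℝ | ((F.map (Polynomial.evalRingHom p.2)).eval p.1 = 0) ∧
      ((G.map (Polynomial.evalRingHom p.2)).eval p.1 = 0)} with hS
  have hsub : S ⊆ ⋃ y ∈ (d.roots.toFinset : Set ℝ),
      ((((F.map (Polynomial.evalRingHom y)).roots.toFinset ∪
         (G.map (Polynomial.evalRingHom y)).roots.toFinset : Finset ℝ)) : Set ℝ) ×ˢ {y} := by
    rintro ⟨x, y⟩ ⟨hFp, hGp⟩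
    have hdy : d.eval y = 0 := by
      have h := congrArg (fun W : Polynomial Rp =>
        (Polynomial.map (Polynomial.evalRingHom y) W).eval x) eqn
      simpa [Polynomial.map_add, Polynomial.map_mul, Polynomial.eval_add,
        Polynomial.eval_mul, Polynomial.map_C, Polynomial.eval_C, hFp, hGp] using h.symm
    have hymem : y ∈ (d.roots.toFinset : Set ℝ) := by
      simp [Multiset.mem_toFinset, Polynomial.mem_roots, hd0, Polynomial.IsRoot, hdy]
    -- not both specializations vanish
    have hnotboth : ¬(F.map (Polynomial.evalRingHom y) = 0 ∧
        G.map (Polynomial.evalRingHom y) = 0) := by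
      rintro ⟨h1, h2⟩
      have key : ∀ W : Polynomial Rp, W.map (Polynomial.evalRingHom y) = 0 →
          Polynomial.C (Polynomial.X - Polynomial.C y) ∣ W := by
        intro W hW
        rw [Polynomial.C_dvd_iff_dvd_coeff]
        intro i
        rw [Polynomial.dvd_iff_isRoot]
        have := congrArg (fun q => Polynomial.coeff q i) hW
        simpa [Polynomial.coeff_map] using this
      have hdvd1 := key _ h1
      have hdvd2 := key _ h2
      have := hco _ hdvd1 hdvd2
      rw [Polynomial.isUnit_C] at this
      exact Polynomial.not_isUnit_X_sub_C y this
    have hxmem : x ∈ (((F.map (Polynomial.evalRingHom y)).roots.toFinset ∪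
        (G.map (Polynomial.evalRingHom y)).roots.toFinset : Finset ℝ) : Set ℝ) := by
      by_cases hFy : F.map (Polynomial.evalRingHom y) = 0
      · have hGy : G.map (Polynomial.evalRingHom y) ≠ 0 := fun h => hnotboth ⟨hFy, h⟩
        simp only [Finset.coe_union, Set.mem_union, Finset.mem_coe, Multiset.mem_toFinset]
        exact Or.inr (Polynomial.mem_roots'.mpr ⟨hGy, hGp⟩)
      · simp only [Finset.coe_union, Set.mem_union, Finset.mem_coe, Multiset.mem_toFinset]
        exact Or.inl (Polynomial.mem_roots'.mpr ⟨hFy, hFp⟩)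
    exact Set.mem_biUnion hymem (by exact ⟨hxmem, rfl⟩)
  refine Set.Finite.subset ?_ hsub
  refine Set.Finite.biUnion (d.roots.toFinset.finite_toSet) ?_
  intro y _
  exact Set.Finite.prod (Finset.finite_toSet _) (Set.finite_singleton y)

/-- Two real bivariate polynomials with no common nonunit factor have finitely many common
real zeros. -/
lemma finite_common_zeros (A B : MvPolynomial (Fin 2) ℝ) (hA : A ≠ 0) (hB : B ≠ 0)
    (hco : ∀ D, D ∣ A → D ∣ B → IsUnit D) :
    {p : ℝ × ℝ | MvPolynomial.eval ![p.1, p.2] A = 0 ∧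
      MvPolynomial.eval ![p.1, p.2] B = 0}.Finite := by
  have hFA : E ℝ A ≠ 0 := fun h => hA ((E ℝ).injective (by simpa using h))
  have hFB : E ℝ B ≠ 0 := fun h => hB ((E ℝ).injective (by simpa using h))
  have hco' : ∀ D, D ∣ E ℝ A → D ∣ E ℝ B → IsUnit D := by
    intro D hDA hDB
    have h1 : (E ℝ).symm D ∣ A := by
      obtain ⟨W, hW⟩ := hDA
      exact ⟨(E ℝ).symm W, by
        apply (E ℝ).injective
        simp [hW, map_mul]⟩
    have h2 : (E ℝ).symm D ∣ B := by
      obtain ⟨W, hW⟩ := hDB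
      exact ⟨(E ℝ).symm W, by
        apply (E ℝ).injective
        simp [hW, map_mul]⟩
    have h3 := hco _ h1 h2
    have h4 := h3.map (E ℝ)
    simpa using h4
  have := finpoly (E ℝ A) (E ℝ B) hFA hFB hco'
  convert this using 1
  ext ⟨x, y⟩
  simp only [Set.mem_setOf_eq, bridge]

/-! ### Complex conjugation machinery -/

lemma conj_map_real (G : MvPolynomial (Fin 2) ℝ) :
    MvPolynomial.map (starRingEnd ℂ) (MvPolynomial.map (algebraMap ℝ ℂ) G)
      = MvPolynomial.map (algebraMap ℝ ℂ) G := by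
  rw [MvPolynomial.map_map]
  have h : (starRingEnd ℂ).comp (algebraMap ℝ ℂ) = algebraMap ℝ ℂ := by
    ext r
    simp [Complex.conj_ofReal]
  rw [h]

lemma conj_conj_mv (p : MvPolynomial (Fin 2) ℂ) :
    MvPolynomial.map (starRingEnd ℂ) (MvPolynomial.map (starRingEnd ℂ) p) = p := by
  rw [MvPolynomial.map_map]
  have h : (starRingEnd ℂ).comp (starRingEnd ℂ) = RingHom.id ℂ := by
    ext z
    simp
  rw [h, MvPolynomial.map_id]

lemma conj_irreducible {Q : MvPolynomial (Fin 2) ℂ} (hQ : Irreducible Q) :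
    Irreducible (MvPolynomial.map (starRingEnd ℂ) Q) := by
  constructor
  · intro hu
    obtain ⟨z, hz0, hz⟩ := isUnit_elim hu
    have : Q = MvPolynomial.C ((starRingEnd ℂ) z) := by
      have := congrArg (MvPolynomial.map (starRingEnd ℂ)) hz
      rwa [conj_conj_mv, MvPolynomial.map_C] at this
    exact hQ.not_isUnit (this ▸ ((isUnit_iff_ne_zero.mpr (by simpa using hz0)).map
      (MvPolynomial.C : ℂ →+* MvPolynomial (Fin 2) ℂ)))
  · intro a b hab
    have h2 := congrArg (MvPolynomial.map (starRingEnd ℂ)) hab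
    rw [conj_conj_mv, map_mul] at h2
    rcases hQ.isUnit_or_isUnit h2 with h | h
    · exact Or.inl (by
        have := h.map (MvPolynomial.map (starRingEnd ℂ))
        rwa [conj_conj_mv] at this)
    · exact Or.inr (by
        have := h.map (MvPolynomial.map (starRingEnd ℂ))
        rwa [conj_conj_mv] at this)

lemma coeff_sum_monomial (F : MvPolynomial (Fin 2) ℂ) (f : ℂ → ℝ) (hf : f 0 = 0)
    (n : Fin 2 →₀ ℕ) :
    MvPolynomial.coeff n (∑ m ∈ F.support, MvPolynomial.monomial m (f (F.coeff m)))
      = f (F.coeff n) := by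
  classical
  rw [MvPolynomial.coeff_sum]
  simp only [MvPolynomial.coeff_monomial]
  rw [Finset.sum_ite_eq' F.support n (fun m => f (F.coeff m))]
  by_cases h : n ∈ F.support
  · simp [h]
  · simp [h, MvPolynomial.notMem_support_iff.mp h, hf]

lemma decomp (F : MvPolynomial (Fin 2) ℂ) :
    ∃ A B : MvPolynomial (Fin 2) ℝ,
      F = MvPolynomial.map (algebraMap ℝ ℂ) A
          + MvPolynomial.C Complex.I * MvPolynomial.map (algebraMap ℝ ℂ) B := by
  classical
  refine ⟨∑ m ∈ F.support, MvPolynomial.monomial m ((F.coeff m).re),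
          ∑ m ∈ F.support, MvPolynomial.monomial m ((F.coeff m).im), ?_⟩
  apply MvPolynomial.ext
  intro n
  rw [MvPolynomial.coeff_add, MvPolynomial.coeff_C_mul, MvPolynomial.coeff_map,
    MvPolynomial.coeff_map, coeff_sum_monomial F _ (by simp) n,
    coeff_sum_monomial F _ (by simp) n]
  have : ((algebraMap ℝ ℂ) (F.coeff n).re) + Complex.I * ((algebraMap ℝ ℂ) (F.coeff n).im)
      = F.coeff n := by
    apply Complex.ext <;> simp
  rw [this]

lemma fixed_descend {F : MvPolynomial (Fin 2) ℂ}
    (h : MvPolynomial.map (starRingEnd ℂ) F = F) :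
    ∃ G : MvPolynomial (Fin 2) ℝ, MvPolynomial.map (algebraMap ℝ ℂ) G = F := by
  obtain ⟨A, B, hAB⟩ := decomp F
  have hc : F = MvPolynomial.map (algebraMap ℝ ℂ) A
      - MvPolynomial.C Complex.I * MvPolynomial.map (algebraMap ℝ ℂ) B := by
    conv_lhs => rw [← h, hAB]
    rw [map_add, map_mul, MvPolynomial.map_C, conj_map_real, conj_map_real, Complex.conj_I,
      map_neg]
    ring
  have h2 : MvPolynomial.C Complex.I * MvPolynomial.map (algebraMap ℝ ℂ) B
      + MvPolynomial.C Complex.I * MvPolynomial.map (algebraMap ℝ ℂ) B = 0 := by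
    linear_combination hc - hAB
  have h3 := add_self_eq_zero.mp h2
  rcases mul_eq_zero.mp h3 with h4 | h4
  · exact absurd (MvPolynomial.C_eq_zero.mp h4) Complex.I_ne_zero
  · exact ⟨A, by rw [hAB, h4, mul_zero, add_zero]⟩

lemma map_real_injective :
    Function.Injective (MvPolynomial.map (algebraMap ℝ ℂ) :
      MvPolynomial (Fin 2) ℝ → MvPolynomial (Fin 2) ℂ) :=
  MvPolynomial.map_injective _ (algebraMap ℝ ℂ).injective

lemma isUnit_of_map_isUnit {D : MvPolynomial (Fin 2) ℝ}
    (h : IsUnit (MvPolynomial.map (algebraMap ℝ ℂ) D)) : IsUnit D := by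
  obtain ⟨z, hz0, hz⟩ := isUnit_elim h
  have hD0 : D ≠ 0 := by
    rintro rfl
    rw [map_zero] at hz
    exact hz0 (MvPolynomial.C_eq_zero.mp hz.symm)
  have hDC : D = MvPolynomial.C (MvPolynomial.coeff 0 D) := by
    apply MvPolynomial.ext
    intro n
    by_cases hn : n = 0
    · simp [hn]
    · have h1 := congrArg (MvPolynomial.coeff n) hz
      rw [MvPolynomial.coeff_map, MvPolynomial.coeff_C, if_neg (fun hh => hn hh.symm)] at h1
      have h2 : ((MvPolynomial.coeff n D : ℝ) : ℂ) = 0 := by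
        rw [← h1]; simp [Complex.coe_algebraMap]
      rw [MvPolynomial.coeff_C, if_neg (fun hh => hn hh.symm)]
      exact_mod_cast h2
  have hc0 : MvPolynomial.coeff 0 D ≠ 0 := fun hc => hD0 (by rw [hDC, hc, map_zero])
  rw [hDC]
  exact (isUnit_iff_ne_zero.mpr hc0).map (MvPolynomial.C : ℝ →+* MvPolynomial (Fin 2) ℝ)

lemma eval_map_real (F : MvPolynomial (Fin 2) ℝ) (x y : ℝ) :
    MvPolynomial.eval ![(x : ℂ), (y : ℂ)] (MvPolynomial.map (algebraMap ℝ ℂ) F)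
      = ((MvPolynomial.eval ![x, y] F : ℝ) : ℂ) := by
  rw [MvPolynomial.eval_map]
  have h := MvPolynomial.eval₂_comp_left (algebraMap ℝ ℂ) (RingHom.id ℝ) ![x, y] F
  have hv : (algebraMap ℝ ℂ) ∘ (![x, y] : Fin 2 → ℝ) = ![(x : ℂ), (y : ℂ)] := by
    funext i
    fin_cases i <;> simp [Complex.coe_algebraMap]
  rw [hv, RingHom.comp_id] at h
  rw [← h]
  rfl

lemma eval_conj (Q : MvPolynomial (Fin 2) ℂ) (x y : ℝ) :
    MvPolynomial.eval ![(x : ℂ), (y : ℂ)] (MvPolynomial.map (starRingEnd ℂ) Q)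
      = (starRingEnd ℂ) (MvPolynomial.eval ![(x : ℂ), (y : ℂ)] Q) := by
  rw [MvPolynomial.eval_map]
  have h := MvPolynomial.eval₂_comp_left (starRingEnd ℂ) (RingHom.id ℂ)
    ![(x : ℂ), (y : ℂ)] Q
  have hv : (starRingEnd ℂ) ∘ (![(x : ℂ), (y : ℂ)] : Fin 2 → ℂ) = ![(x : ℂ), (y : ℂ)] := by
    funext i
    fin_cases i <;> simp [Complex.conj_ofReal]
  rw [hv, RingHom.comp_id] at h
  rw [← h]
  rfl

/-- Descent of a factorization: if `φ P = φ G * S` with `G ≠ 0` then `S` is real too. -/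
lemma descend {P G : MvPolynomial (Fin 2) ℝ} {S : MvPolynomial (Fin 2) ℂ} (hG : G ≠ 0)
    (h : MvPolynomial.map (algebraMap ℝ ℂ) P = MvPolynomial.map (algebraMap ℝ ℂ) G * S) :
    ∃ T : MvPolynomial (Fin 2) ℝ, MvPolynomial.map (algebraMap ℝ ℂ) T = S ∧ P = G * T := by
  have hG0 : MvPolynomial.map (algebraMap ℝ ℂ) G ≠ 0 := fun hh =>
    hG (map_real_injective (by simpa using hh))
  have h2 := congrArg (MvPolynomial.map (starRingEnd ℂ)) h
  rw [map_mul, conj_map_real, conj_map_real] at h2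
  have h3 : MvPolynomial.map (starRingEnd ℂ) S = S :=
    mul_left_cancel₀ hG0 (h2.symm.trans h)
  obtain ⟨T, hT⟩ := fixed_descend h3
  refine ⟨T, hT, map_real_injective ?_⟩
  rw [h, map_mul, hT]

end AuxIrredOverC

end AuxIrredOverC

open AuxIrredOverC

/-- If `P ∈ ℝ[X, Y]` is irreducible and its real zero locus is infinite, then `P` remains
irreducible in `ℂ[X, Y]`. -/
theorem irreducible_over_C_of_infinite_real_zeros (P : MvPolynomial (Fin 2) ℝ)
    (hP : Irreducible P)
    (hinf : {p : ℝ × ℝ | MvPolynomial.eval ![p.1, p.2] P = 0}.Infinite) :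
    Irreducible (MvPolynomial.map (algebraMap ℝ ℂ) P) := by
  by_contra hred
  have hP0 : P ≠ 0 := hP.ne_zero
  have hφP0 : MvPolynomial.map (algebraMap ℝ ℂ) P ≠ 0 := fun h =>
    hP0 (map_real_injective (by simpa using h))
  have hφPnu : ¬IsUnit (MvPolynomial.map (algebraMap ℝ ℂ) P) := fun h =>
    hP.not_isUnit (isUnit_of_map_isUnit h)
  obtain ⟨Q, hQirr, hQdvd⟩ := WfDvdMonoid.exists_irreducible_factor hφPnu hφP0
  set cQ := MvPolynomial.map (starRingEnd ℂ) Q with hcQ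
  have hcQirr : Irreducible cQ := conj_irreducible hQirr
  have hcQdvd : cQ ∣ MvPolynomial.map (algebraMap ℝ ℂ) P := by
    have := map_dvd (MvPolynomial.map (starRingEnd ℂ)) hQdvd
    rwa [conj_map_real] at this
  have hQ0 : Q ≠ 0 := hQirr.ne_zero
  by_cases hass : Associated Q cQ
  · -- `Q` is associated to its conjugate: a unit multiple of `Q` is real, and `P` is then
    -- an associate of an irreducible element, contradiction with `hred`.
    obtain ⟨u, hu⟩ := hass
    obtain ⟨z, hz0, hz⟩ := isUnit_elim u.isUnit
    have hcz : cQ = MvPolynomial.C z * Q := by rw [← hu, hz]; ring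
    have hz1 : (starRingEnd ℂ) z * z = 1 := by
      have h1 := congrArg (MvPolynomial.map (starRingEnd ℂ)) hcz
      rw [conj_conj_mv, map_mul, MvPolynomial.map_C, ← hcQ, hcz, ← mul_assoc,
        ← MvPolynomial.C_mul] at h1
      have h2 : MvPolynomial.C ((starRingEnd ℂ) z * z) * Q = 1 * Q := by rw [one_mul, ← h1]
      have h3 := mul_right_cancel₀ hQ0 h2
      have h4 := congrArg MvPolynomial.constantCoeff h3
      simpa using h4
    set t : ℂ := if z = -1 then Complex.I * (1 - z) else 1 + z with ht
    have htz1 : (starRingEnd ℂ) t * z = t := by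
      by_cases hzm : z = -1
      · rw [ht, if_pos hzm, hzm]
        simp [Complex.conj_I]
      · rw [ht, if_neg hzm, map_add, map_one]
        ring_nf
        rw [hz1]
    have htz2 : t ≠ 0 := by
      by_cases hzm : z = -1
      · rw [ht, if_pos hzm, hzm]
        simp [Complex.I_ne_zero]
      · rw [ht, if_neg hzm]
        intro hh
        exact hzm (by linear_combination hh)
    set Q' := MvPolynomial.C t * Q with hQ'
    have hQ'fix : MvPolynomial.map (starRingEnd ℂ) Q' = Q' := by
      rw [hQ', map_mul, MvPolynomial.map_C, ← hcQ, hcz, ← mul_assoc, ← MvPolynomial.C_mul,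
        htz1]
    obtain ⟨G, hG⟩ := fixed_descend hQ'fix
    have hCtu : IsUnit (MvPolynomial.C t : MvPolynomial (Fin 2) ℂ) :=
      (isUnit_iff_ne_zero.mpr htz2).map (MvPolynomial.C : ℂ →+* MvPolynomial (Fin 2) ℂ)
    have hQ'assoc : Associated Q Q' := ⟨hCtu.unit, by rw [IsUnit.unit_spec, hQ']; ring⟩
    have hQ'irr : Irreducible Q' := hQ'assoc.irreducible hQirr
    have hQ'dvd : Q' ∣ MvPolynomial.map (algebraMap ℝ ℂ) P := hQ'assoc.symm.dvd.trans hQdvd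
    have hG0 : G ≠ 0 := fun hh => hQ'irr.ne_zero (by rw [← hG, hh, map_zero])
    obtain ⟨S, hSx⟩ := hQ'dvd
    obtain ⟨T, hT, hPT⟩ := descend hG0 (by rw [hSx, hG])
    rcases hP.isUnit_or_isUnit hPT with hUG | hUT
    · exact hQ'irr.not_isUnit (hG ▸ hUG.map (MvPolynomial.map (algebraMap ℝ ℂ)))
    · have hUφT : IsUnit (MvPolynomial.map (algebraMap ℝ ℂ) T) :=
        hUT.map (MvPolynomial.map (algebraMap ℝ ℂ))
      have hassoc : Associated Q' (MvPolynomial.map (algebraMap ℝ ℂ) P) :=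
        ⟨hUφT.unit, by rw [IsUnit.unit_spec, ← hG, ← map_mul, ← hPT]⟩
      exact hred (hassoc.irreducible hQ'irr)
  · -- `Q` is not associated to its conjugate: then `P = Q * conj Q` up to units, and the real
    -- zero set of `P` is contained in the finite common zero set of two coprime polynomials.
    have hQprime := UniqueFactorizationMonoid.irreducible_iff_prime.mp hQirr
    have hcQprime := UniqueFactorizationMonoid.irreducible_iff_prime.mp hcQirr
    have hprod : Q * cQ ∣ MvPolynomial.map (algebraMap ℝ ℂ) P := by
      obtain ⟨m, hm⟩ := hQdvd
      have h1 : cQ ∣ Q * m := hm ▸ hcQdvd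
      rcases hcQprime.2.2 _ _ h1 with h | h
      · exact absurd (hcQirr.associated_of_dvd hQirr h).symm hass
      · obtain ⟨m', hm'⟩ := h
        exact ⟨m', by rw [hm, hm']; ring⟩
    have hMfix : MvPolynomial.map (starRingEnd ℂ) (Q * cQ) = Q * cQ := by
      have h1 : MvPolynomial.map (starRingEnd ℂ) cQ = Q := by rw [hcQ, conj_conj_mv]
      rw [map_mul, h1, ← hcQ]
      ring
    obtain ⟨M, hM⟩ := fixed_descend hMfix
    have hM0 : M ≠ 0 := fun hh =>
      mul_ne_zero hQ0 hcQirr.ne_zero (by rw [← hM, hh, map_zero])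
    obtain ⟨S, hSx⟩ := hprod
    obtain ⟨T, hT, hPT⟩ := descend hM0 (by rw [hSx, hM])
    have hMnu : ¬IsUnit M := by
      intro hUM
      have h1 := hUM.map (MvPolynomial.map (algebraMap ℝ ℂ))
      rw [hM] at h1
      exact hQirr.not_isUnit (isUnit_of_mul_isUnit_left h1)
    have hUT : IsUnit T := (hP.isUnit_or_isUnit hPT).resolve_left hMnu
    obtain ⟨A, B, hAB⟩ := decomp Q
    have hBne : B ≠ 0 := by
      intro hh
      rw [hh, map_zero, mul_zero, add_zero] at hAB
      have h1 : cQ = Q := by rw [hcQ, hAB, conj_map_real]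
      exact hass (by rw [h1])
    have hAne : A ≠ 0 := by
      intro hh
      rw [hh, map_zero, zero_add] at hAB
      have h1 : cQ = -Q := by
        rw [hcQ, hAB, map_mul, MvPolynomial.map_C, conj_map_real, Complex.conj_I, map_neg]
        ring
      exact hass ⟨-1, by rw [h1]; simp⟩
    have hcoAB : ∀ D, D ∣ A → D ∣ B → IsUnit D := by
      intro D hDA hDB
      obtain ⟨A', hA'⟩ := hDA
      obtain ⟨B', hB'⟩ := hDB
      set W := MvPolynomial.map (algebraMap ℝ ℂ) A' +
        MvPolynomial.C Complex.I * MvPolynomial.map (algebraMap ℝ ℂ) B' with hW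
      have hfact : Q = MvPolynomial.map (algebraMap ℝ ℂ) D * W := by
        rw [hW, hAB, hA', hB', map_mul, map_mul]
        ring
      rcases hQirr.isUnit_or_isUnit hfact with h | h
      · exact isUnit_of_map_isUnit h
      · exfalso
        apply hass
        have hDQ : Associated (MvPolynomial.map (algebraMap ℝ ℂ) D) Q :=
          ⟨h.unit, by rw [IsUnit.unit_spec]; exact hfact.symm⟩
        have h3 : cQ = MvPolynomial.map (algebraMap ℝ ℂ) D *
            MvPolynomial.map (starRingEnd ℂ) W := by
          rw [hcQ, hfact, map_mul, conj_map_real]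
        have hcW : IsUnit (MvPolynomial.map (starRingEnd ℂ) W) :=
          h.map (MvPolynomial.map (starRingEnd ℂ))
        have hDcQ : Associated (MvPolynomial.map (algebraMap ℝ ℂ) D) cQ :=
          ⟨hcW.unit, by rw [IsUnit.unit_spec]; exact h3.symm⟩
        exact hDQ.symm.trans hDcQ
    have hsub : {p : ℝ × ℝ | MvPolynomial.eval ![p.1, p.2] P = 0} ⊆
        {p : ℝ × ℝ | MvPolynomial.eval ![p.1, p.2] A = 0 ∧
          MvPolynomial.eval ![p.1, p.2] B = 0} := by
      rintro ⟨x, y⟩ hp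
      simp only [Set.mem_setOf_eq] at hp ⊢
      have h1 : MvPolynomial.eval ![(x : ℂ), (y : ℂ)]
          (MvPolynomial.map (algebraMap ℝ ℂ) P) = 0 := by
        rw [eval_map_real, hp, Complex.ofReal_zero]
      have hfactP : MvPolynomial.map (algebraMap ℝ ℂ) P =
          Q * cQ * MvPolynomial.map (algebraMap ℝ ℂ) T := by
        rw [hPT, map_mul, hM]
      rw [hfactP, map_mul, map_mul] at h1
      have hTu : IsUnit (MvPolynomial.eval ![(x : ℂ), (y : ℂ)]
          (MvPolynomial.map (algebraMap ℝ ℂ) T)) :=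
        (hUT.map (MvPolynomial.map (algebraMap ℝ ℂ))).map
          (MvPolynomial.eval ![(x : ℂ), (y : ℂ)])
      have h2 : MvPolynomial.eval ![(x : ℂ), (y : ℂ)] Q *
          MvPolynomial.eval ![(x : ℂ), (y : ℂ)] cQ = 0 :=
        (mul_eq_zero.mp h1).resolve_right hTu.ne_zero
      rw [hcQ, eval_conj] at h2
      have h4 : MvPolynomial.eval ![(x : ℂ), (y : ℂ)] Q = 0 := by
        rw [Complex.mul_conj] at h2
        exact Complex.normSq_eq_zero.mp (by exact_mod_cast h2)
      have h5 : ((MvPolynomial.eval ![x, y] A : ℝ) : ℂ) +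
          Complex.I * ((MvPolynomial.eval ![x, y] B : ℝ) : ℂ) = 0 := by
        rw [← eval_map_real A x y, ← eval_map_real B x y, ← h4, hAB, map_add, map_mul,
          MvPolynomial.eval_C]
      constructor
      · have := congrArg Complex.re h5
        simpa using this
      · have := congrArg Complex.im h5
        simpa using this
    exact (finite_common_zeros A B hAne hBne hcoAB).not_infinite (hinf.mono hsub)
end

section
/- The image of the y-axis under G is transcendental: there is no nonzero polynomial P ∈ ℝ[X, Y] such that the set {(Re Γ(it), Im Γ(it)) : t ∈ ℝ, t ≠ 0} is contained in the real zero set of P. -/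
open MvPolynomial Complex Filter Topology Finset

noncomputable section


private def badSet : Set ℂ := {z : ℂ | ∃ n : ℤ, z = (n : ℂ) * Complex.I}

private lemma mem_badSet_iff (z : ℂ) :
    z ∈ badSet ↔ z.re = 0 ∧ ∃ n : ℤ, z.im = n := by
  constructor
  · rintro ⟨n, rfl⟩
    refine ⟨by simp, n, by simp⟩
  · rintro ⟨h0, n, hn⟩
    exact ⟨n, by apply Complex.ext <;> simp [h0, hn]⟩

private lemma isClosed_badSet : IsClosed badSet := by
  have : badSet = Complex.re ⁻¹' {0} ∩ Complex.im ⁻¹' Set.range ((↑) : ℤ → ℝ) := by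
    ext z
    simp [mem_badSet_iff, eq_comm]
  rw [this]
  exact ((isClosed_singleton.preimage Complex.continuous_re).inter
    (Int.isClosedEmbedding_coe_real.isClosed_range.preimage Complex.continuous_im))

private lemma countable_badSet : badSet.Countable := by
  have : badSet = Set.range (fun n : ℤ => (n : ℂ) * Complex.I) := by
    ext z; simp [badSet, eq_comm, Set.mem_range]
  rw [this]
  exact Set.countable_range _

private lemma preconnected_compl_badSet : IsPreconnected badSetᶜ :=
  (countable_badSet.isConnected_compl_of_one_lt_rank
    (by rw [Complex.rank_real_complex]; norm_num)).isPreconnected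

private lemma diffOn_f1 : DifferentiableOn ℂ (fun z => Complex.Gamma (Complex.I * z)) badSetᶜ := by
  intro z hz
  have h1 : ∀ m : ℕ, Complex.I * z ≠ -m := by
    intro m hm
    apply hz
    refine ⟨m, ?_⟩
    have : z = -Complex.I * (Complex.I * z) := by
      rw [← mul_assoc]; simp [Complex.I_mul_I]
    rw [this, hm]; push_cast; ring
  exact ((Complex.differentiableAt_Gamma _ h1).comp z
    ((differentiableAt_id.const_mul Complex.I))).differentiableWithinAt

private lemma diffOn_f2 : DifferentiableOn ℂ (fun z => Complex.Gamma (-(Complex.I * z))) badSetᶜ := by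
  intro z hz
  have h1 : ∀ m : ℕ, -(Complex.I * z) ≠ -m := by
    intro m hm
    apply hz
    refine ⟨-m, ?_⟩
    have h3 : z = -Complex.I * (Complex.I * z) := by
      rw [← mul_assoc]; simp [Complex.I_mul_I]
    have h2 : Complex.I * z = (m : ℂ) := by
      have := congrArg Neg.neg hm; simpa using this
    rw [h3, h2]; push_cast; ring
  exact ((Complex.differentiableAt_Gamma _ h1).comp z
    ((differentiableAt_id.const_mul Complex.I)).neg).differentiableWithinAt

private lemma key_vanish (P : MvPolynomial (Fin 2) ℝ)
    (hv : ∀ t : ℝ, t ≠ 0 →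
      MvPolynomial.eval ![(Complex.Gamma ((t : ℂ) * Complex.I)).re,
        (Complex.Gamma ((t : ℂ) * Complex.I)).im] P = 0)
    (s : ℝ) (hs : ∀ n : ℤ, s ≠ n) :
    eval₂ (algebraMap ℝ ℂ) ![(Complex.Gamma s + Complex.Gamma (-(s : ℂ))) / 2,
      (Complex.Gamma s - Complex.Gamma (-(s : ℂ))) / (2 * Complex.I)] P = 0 := by
  set f1 : ℂ → ℂ := fun z => (Complex.Gamma (Complex.I * z) + Complex.Gamma (-(Complex.I * z))) / 2
    with hf1def
  set f2 : ℂ → ℂ :=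
    fun z => (Complex.Gamma (Complex.I * z) - Complex.Gamma (-(Complex.I * z))) / (2 * Complex.I)
    with hf2def
  set h : ℂ → ℂ := fun z => eval₂ (algebraMap ℝ ℂ) ![f1 z, f2 z] P with hhdef
  -- h vanishes on the nonzero reals
  have hreal : ∀ t : ℝ, t ≠ 0 → h t = 0 := by
    intro t ht
    have hconj : Complex.Gamma (-(Complex.I * (t : ℂ))) =
        (starRingEnd ℂ) (Complex.Gamma (Complex.I * t)) := by
      rw [← Complex.Gamma_conj]
      congr 1
      apply Complex.ext <;> simp
    have hw1 : f1 t = ((Complex.Gamma ((t : ℂ) * Complex.I)).re : ℂ) := by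
      rw [hf1def]
      simp only [hconj]
      rw [Complex.add_conj]
      rw [mul_comm (Complex.I) (t : ℂ)]
      push_cast
      ring
    have hw2 : f2 t = ((Complex.Gamma ((t : ℂ) * Complex.I)).im : ℂ) := by
      rw [hf2def]
      simp only [hconj]
      rw [Complex.sub_conj]
      rw [mul_comm (Complex.I) (t : ℂ)]
      push_cast
      field_simp
    have hvec : ![f1 (t : ℂ), f2 (t : ℂ)] = ⇑(algebraMap ℝ ℂ) ∘ (![(Complex.Gamma ((t : ℂ) * Complex.I)).re,
          (Complex.Gamma ((t : ℂ) * Complex.I)).im]) := by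
      funext i
      fin_cases i <;> simp [hw1, hw2]
    rw [hhdef]
    simp only [hvec]
    have hcl := MvPolynomial.eval₂_comp_left (algebraMap ℝ ℂ) (RingHom.id ℝ)
      ![(Complex.Gamma ((t : ℂ) * Complex.I)).re, (Complex.Gamma ((t : ℂ) * Complex.I)).im] P
    rw [RingHom.comp_id] at hcl
    rw [← hcl]
    have : MvPolynomial.eval₂ (RingHom.id ℝ)
        ![(Complex.Gamma ((t : ℂ) * Complex.I)).re,
          (Complex.Gamma ((t : ℂ) * Complex.I)).im] P = 0 := hv t ht
    rw [this, map_zero]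
  -- h is differentiable on badSetᶜ
  have hdiff : DifferentiableOn ℂ h badSetᶜ := by
    have hrepr : h = fun z => ∑ d ∈ P.support,
        (algebraMap ℝ ℂ) (P.coeff d) * ((f1 z) ^ d 0 * (f2 z) ^ d 1) := by
      funext z
      show eval₂ (algebraMap ℝ ℂ) ![f1 z, f2 z] P = _
      rw [MvPolynomial.eval₂_eq']
      congr 1
      funext d
      rw [Fin.prod_univ_two]
      simp
    rw [hrepr]
    apply DifferentiableOn.fun_sum
    intro d _
    exact DifferentiableOn.const_mul
      ((((diffOn_f1.add diffOn_f2).div_const 2).pow (d 0)).mul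
        (((diffOn_f1.sub diffOn_f2).div_const (2 * Complex.I)).pow (d 1))) _
  -- identity theorem
  have hone : (1 : ℂ) ∈ badSetᶜ := by
    intro hmem
    rw [mem_badSet_iff] at hmem
    simp at hmem
  have hfreq : ∃ᶠ z in 𝓝[≠] (1 : ℂ), h z = 0 := by
    set u : ℕ → ℂ := fun j => ((1 + ((j : ℝ) + 2)⁻¹ : ℝ) : ℂ) with hudef
    have hinv : Tendsto (fun j : ℕ => ((j : ℝ) + 2)⁻¹) atTop (𝓝 0) :=
      tendsto_inv_atTop_zero.comp
        (tendsto_atTop_add_const_right _ 2 tendsto_natCast_atTop_atTop)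
    have hbase : Tendsto (fun j : ℕ => (1 + ((j : ℝ) + 2)⁻¹ : ℝ)) atTop (𝓝 1) := by
      simpa using tendsto_const_nhds.add hinv
    have htend : Tendsto u atTop (𝓝[≠] (1 : ℂ)) := by
      apply tendsto_nhdsWithin_of_tendsto_nhds_of_eventually_within
      · have h2 : Tendsto (fun j : ℕ => ((1 + ((j : ℝ) + 2)⁻¹ : ℝ) : ℂ)) atTop
            (𝓝 ((1 : ℝ) : ℂ)) := (Complex.continuous_ofReal.tendsto _).comp hbase
        rw [Complex.ofReal_one] at h2
        exact h2
      · filter_upwards with j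
        simp only [hudef, Set.mem_compl_iff, Set.mem_singleton_iff]
        intro hj
        have : (1 + ((j : ℝ) + 2)⁻¹ : ℝ) = 1 := by exact_mod_cast hj
        have hpos : (0 : ℝ) < ((j : ℝ) + 2)⁻¹ := by positivity
        linarith
    apply htend.frequently
    apply Filter.Eventually.frequently
    filter_upwards with j
    apply hreal
    have hpos : (0 : ℝ) < ((j : ℝ) + 2)⁻¹ := by positivity
    positivity
  have hzero : Set.EqOn h 0 badSetᶜ :=
    (hdiff.analyticOnNhd isClosed_badSet.isOpen_compl).eqOn_zero_of_preconnected_of_frequently_eq_zero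
      preconnected_compl_badSet hone hfreq
  -- evaluate at z = -I s
  have hmem : (-(Complex.I * (s : ℂ))) ∈ badSetᶜ := by
    intro hmem
    rw [mem_badSet_iff] at hmem
    obtain ⟨h0, n, hn⟩ := hmem
    simp at hn
    exact hs (-n) (by push_cast; linarith)
  have h0 := hzero hmem
  have hIz : Complex.I * -(Complex.I * (s : ℂ)) = (s : ℂ) := by
    rw [mul_neg, ← mul_assoc, Complex.I_mul_I]; ring
  rw [hhdef] at h0
  simp only [Pi.zero_apply] at h0
  rw [hf1def, hf2def] at h0
  simp only [hIz] at h0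
  exact h0



private def cA : ℂ →+* Polynomial (Polynomial ℂ) :=
  (Polynomial.C : Polynomial ℂ →+* Polynomial (Polynomial ℂ)).comp
    (Polynomial.C : ℂ →+* Polynomial ℂ)

private def g0 : Polynomial (Polynomial ℂ) :=
  Polynomial.C (Polynomial.C (2⁻¹ : ℂ)) * (Polynomial.C Polynomial.X + Polynomial.X)

private def g1 : Polynomial (Polynomial ℂ) :=
  Polynomial.C (Polynomial.C ((2 * Complex.I)⁻¹ : ℂ)) * (Polynomial.C Polynomial.X - Polynomial.X)

private def Wof (P : MvPolynomial (Fin 2) ℝ) : Polynomial (Polynomial ℂ) :=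
  MvPolynomial.eval₂ (cA.comp (algebraMap ℝ ℂ)) ![g0, g1] P

private def evab (a b : ℂ) : Polynomial (Polynomial ℂ) →+* ℂ :=
  Polynomial.eval₂RingHom (Polynomial.evalRingHom a) b

private lemma evab_Wof (P : MvPolynomial (Fin 2) ℝ) (a b : ℂ) :
    evab a b (Wof P) =
      eval₂ (algebraMap ℝ ℂ) ![(a + b) / 2, (a - b) / (2 * Complex.I)] P := by
  rw [Wof, MvPolynomial.eval₂_comp_left (evab a b)]
  congr 1
  · ext r
    simp [evab, cA]
  · funext i
    fin_cases i
    · show evab a b g0 = (a + b) / 2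
      simp [evab, g0]
      ring
    · show evab a b g1 = (a - b) / (2 * Complex.I)
      simp [evab, g1]
      field_simp
      linear_combination (-(a - b)) * Complex.I_mul_I

private def psiHom : Polynomial (Polynomial ℂ) →+* MvPolynomial (Fin 2) ℂ :=
  Polynomial.eval₂RingHom
    (Polynomial.eval₂RingHom (MvPolynomial.C : ℂ →+* MvPolynomial (Fin 2) ℂ)
      (X 0 + MvPolynomial.C Complex.I * X 1))
    (X 0 - MvPolynomial.C Complex.I * X 1)

private lemma psi_Wof (P : MvPolynomial (Fin 2) ℝ) :
    psiHom (Wof P) = MvPolynomial.map (algebraMap ℝ ℂ) P := by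
  rw [Wof, MvPolynomial.eval₂_comp_left psiHom]
  have h1 : psiHom.comp (cA.comp (algebraMap ℝ ℂ)) =
      (MvPolynomial.C : ℂ →+* MvPolynomial (Fin 2) ℂ).comp (algebraMap ℝ ℂ) := by
    ext r
    simp [psiHom, cA]
  have h2 : ⇑psiHom ∘ ![g0, g1] = (X : Fin 2 → MvPolynomial (Fin 2) ℂ) := by
    funext i
    fin_cases i
    · show psiHom g0 = X 0
      simp [psiHom, g0]
      have h2' : (MvPolynomial.C (2⁻¹ : ℂ) : MvPolynomial (Fin 2) ℂ) * 2 = 1 := by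
        rw [← map_ofNat (MvPolynomial.C : ℂ →+* MvPolynomial (Fin 2) ℂ) 2, ← map_mul]
        norm_num
      linear_combination (X 0 : MvPolynomial (Fin 2) ℂ) * h2'
    · show psiHom g1 = X 1
      simp [psiHom, g1]
      have h2' : (MvPolynomial.C (2⁻¹ : ℂ) : MvPolynomial (Fin 2) ℂ) * 2 = 1 := by
        rw [← map_ofNat (MvPolynomial.C : ℂ →+* MvPolynomial (Fin 2) ℂ) 2, ← map_mul]
        norm_num
      have hI : (MvPolynomial.C Complex.I : MvPolynomial (Fin 2) ℂ) * MvPolynomial.C Complex.I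
          = -1 := by
        rw [← map_mul, Complex.I_mul_I, map_neg, map_one]
      linear_combination (-(MvPolynomial.C (2⁻¹ : ℂ)) * 2 * X 1) * hI
        + (X 1 : MvPolynomial (Fin 2) ℂ) * h2'
  rw [h1, h2]
  show eval₂Hom _ X P = _
  congr 1
  ext <;> simp

private lemma Wof_ne_zero (P : MvPolynomial (Fin 2) ℝ) (hP : P ≠ 0) : Wof P ≠ 0 := by
  intro hW
  apply hP
  have := psi_Wof P
  rw [hW, map_zero] at this
  have hinj := MvPolynomial.map_injective (algebraMap ℝ ℂ)
    (algebraMap ℝ ℂ).injective (σ := Fin 2)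
  apply hinj
  rw [map_zero, ← this]



private lemma pow_inv_aux {b : ℂ} (hb : b ≠ 0) {k D : ℕ} (h : k ≤ D) :
    b ^ k * (b⁻¹) ^ D = (b⁻¹) ^ (D - k) := by
  obtain ⟨e, rfl⟩ := Nat.exists_eq_add_of_le h
  rw [pow_add, ← mul_assoc, ← mul_pow, mul_inv_cancel₀ hb, one_pow, one_mul,
    Nat.add_sub_cancel_left]

private lemma W_eq_zero (W : Polynomial (Polynomial ℂ))
    (hvan : ∀ s : ℝ, (∀ n : ℤ, s ≠ n) →
      evab (Complex.Gamma (s : ℂ)) (Complex.Gamma (-(s : ℂ))) W = 0) :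
    W = 0 := by
  by_contra hW
  set D := W.natDegree with hD
  set w : Polynomial ℂ := W.coeff D with hw
  have hwne : w ≠ 0 := by
    rw [hw, hD]
    exact Polynomial.leadingCoeff_ne_zero.mpr hW
  -- every value (m+2)! is a root of w
  have hroot : ∀ m : ℕ, w.IsRoot (((m + 2).factorial : ℕ) : ℂ) := by
    intro m
    set s : ℕ → ℝ := fun j => (m + 3 : ℝ) + ((j : ℝ) + 2)⁻¹ with hsdef
    have hinvlim : Tendsto (fun j : ℕ => ((j : ℝ) + 2)⁻¹) atTop (𝓝 0) :=
      tendsto_inv_atTop_zero.comp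
        (tendsto_atTop_add_const_right _ 2 tendsto_natCast_atTop_atTop)
    have hslim : Tendsto s atTop (𝓝 (m + 3 : ℝ)) := by
      simpa using tendsto_const_nhds.add hinvlim
    have hinv_pos : ∀ j : ℕ, (0 : ℝ) < ((j : ℝ) + 2)⁻¹ := by
      intro j; positivity
    have hinv_lt : ∀ j : ℕ, ((j : ℝ) + 2)⁻¹ < 1 := by
      intro j
      rw [inv_lt_one_iff₀]
      right
      have : (0 : ℝ) ≤ (j : ℝ) := Nat.cast_nonneg j
      linarith
    have hnotint : ∀ j : ℕ, ∀ n : ℤ, s j ≠ n := by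
      intro j n hjn
      have h1 : ((n - (m + 3) : ℤ) : ℝ) = ((j : ℝ) + 2)⁻¹ := by
        push_cast
        rw [← hjn]
        simp [hsdef]
      have h2 : (0 : ℝ) < ((n - (m + 3) : ℤ) : ℝ) := by rw [h1]; exact hinv_pos j
      have h3 : ((n - (m + 3) : ℤ) : ℝ) < 1 := by rw [h1]; exact hinv_lt j
      have h4 : (0 : ℤ) < n - (m + 3) := by exact_mod_cast h2
      have h5 : (n - (m + 3) : ℤ) < 1 := by exact_mod_cast h3
      omega
    have hspos : ∀ j : ℕ, (0 : ℝ) < s j := by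
      intro j
      have := hinv_pos j
      have : (0 : ℝ) ≤ (m : ℝ) := Nat.cast_nonneg m
      simp only [hsdef]
      positivity
    set a : ℕ → ℂ := fun j => Complex.Gamma ((s j : ℝ) : ℂ) with hadef
    set b : ℕ → ℂ := fun j => Complex.Gamma (-((s j : ℝ) : ℂ)) with hbdef
    set t : ℕ → ℂ := fun j => (b j)⁻¹ with htdef
    have hbne : ∀ j, b j ≠ 0 := by
      intro j
      apply Complex.Gamma_ne_zero
      intro k hk
      have : ((s j : ℝ) : ℂ) = (k : ℂ) := by
        have := congrArg Neg.neg hk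
        simpa using this
      have : s j = (k : ℝ) := by exact_mod_cast this
      exact hnotint j k (by exact_mod_cast this)
    -- reflection formula
    have hreflect : ∀ j, t j =
        -(((s j : ℝ) : ℂ) * Complex.sin ((Real.pi : ℂ) * (s j : ℝ)) *
          Complex.Gamma ((s j : ℝ) : ℂ)) / (Real.pi : ℂ) := by
      intro j
      have hsne : ((s j : ℝ) : ℂ) ≠ 0 := by
        exact_mod_cast ne_of_gt (hspos j)
      have hpine : ((Real.pi : ℝ) : ℂ) ≠ 0 := by
        exact_mod_cast Real.pi_ne_zero
      have hsin : Complex.sin ((Real.pi : ℂ) * ((s j : ℝ) : ℂ)) ≠ 0 := by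
        rw [Complex.sin_ne_zero_iff]
        intro k hk
        apply hnotint j k
        rw [mul_comm ((k : ℂ)) _] at hk
        have h2 : ((s j : ℝ) : ℂ) = (k : ℂ) := mul_left_cancel₀ hpine hk
        exact_mod_cast h2
      have hrefl := Complex.Gamma_mul_Gamma_one_sub (-((s j : ℝ) : ℂ))
      rw [show (1 : ℂ) - -((s j : ℝ) : ℂ) = ((s j : ℝ) : ℂ) + 1 from by ring,
        Complex.Gamma_add_one _ hsne,
        show (Real.pi : ℂ) * -((s j : ℝ) : ℂ) = -((Real.pi : ℂ) * ((s j : ℝ) : ℂ)) from by ring,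
        Complex.sin_neg] at hrefl
      -- hrefl : Γ(-s) * (s * Γ s) = π / -sin(π s)
      have hkey : b j * (-(((s j : ℝ) : ℂ) * Complex.sin ((Real.pi : ℂ) * (s j : ℝ)) *
          Complex.Gamma ((s j : ℝ) : ℂ)) / (Real.pi : ℂ)) = 1 := by
        rw [hbdef]
        field_simp [hsin, hpine] at hrefl ⊢
        have hsin2 : Complex.sin (((s j : ℝ) : ℂ) * (Real.pi : ℂ)) ≠ 0 := by rwa [mul_comm]
        have hSS := mul_inv_cancel₀ hsin2
        linear_combination (-(Complex.sin (((s j : ℝ) : ℂ) * (Real.pi : ℂ)))) * hrefl + (Real.pi : ℂ) * hSS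
      rw [htdef]
      exact inv_eq_of_mul_eq_one_right hkey
    -- limits
    have hofreal : Tendsto (fun j => ((s j : ℝ) : ℂ)) atTop (𝓝 (((m + 3 : ℝ) : ℂ))) :=
      (Complex.continuous_ofReal.tendsto _).comp hslim
    have hcnotpole : ∀ k : ℕ, ((m + 3 : ℝ) : ℂ) ≠ -(k : ℂ) := by
      intro k hk
      have := congrArg Complex.re hk
      simp at this
      have h0 : (0 : ℝ) ≤ (k : ℝ) := Nat.cast_nonneg k
      have h1 : (0 : ℝ) ≤ (m : ℝ) := Nat.cast_nonneg m
      linarith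
    have hGcont : ContinuousAt Complex.Gamma ((m + 3 : ℝ) : ℂ) :=
      (Complex.differentiableAt_Gamma _ hcnotpole).continuousAt
    have halim : Tendsto a atTop (𝓝 (((m + 2).factorial : ℕ) : ℂ)) := by
      have h1 : Tendsto a atTop (𝓝 (Complex.Gamma ((m + 3 : ℝ) : ℂ))) :=
        hGcont.tendsto.comp hofreal
      have h2 : Complex.Gamma ((m + 3 : ℝ) : ℂ) = (((m + 2).factorial : ℕ) : ℂ) := by
        rw [show ((m + 3 : ℝ) : ℂ) = ((m + 2 : ℕ) : ℂ) + 1 from by push_cast; ring,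
          Complex.Gamma_nat_eq_factorial]
      rwa [h2] at h1
    have htlim : Tendsto t atTop (𝓝 0) := by
      set gfun : ℂ → ℂ :=
        fun z => -(z * Complex.sin ((Real.pi : ℂ) * z) * Complex.Gamma z) / (Real.pi : ℂ)
        with hgdef
      have hgcont : ContinuousAt gfun ((m + 3 : ℝ) : ℂ) := by
        apply ContinuousAt.div_const
        apply ContinuousAt.neg
        exact (continuousAt_id.mul ((Complex.continuous_sin.continuousAt).comp
          (continuousAt_const.mul continuousAt_id))).mul hGcont
      have hgval : gfun ((m + 3 : ℝ) : ℂ) = 0 := by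
        have hsin0 : Complex.sin ((Real.pi : ℂ) * ((m + 3 : ℝ) : ℂ)) = 0 := by
          rw [show ((Real.pi : ℝ) : ℂ) * ((m + 3 : ℝ) : ℂ)
              = ((m + 3 : ℤ) : ℂ) * ((Real.pi : ℝ) : ℂ) from by push_cast; ring]
          exact Complex.sin_int_mul_pi _
        show -(((m + 3 : ℝ) : ℂ) * Complex.sin ((Real.pi : ℂ) * ((m + 3 : ℝ) : ℂ)) *
          Complex.Gamma ((m + 3 : ℝ) : ℂ)) / (Real.pi : ℂ) = 0
        rw [hsin0]
        simp
      have h1 : Tendsto (fun j => gfun ((s j : ℝ) : ℂ)) atTop (𝓝 0) := by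
        have := hgcont.tendsto.comp hofreal
        rwa [hgval] at this
      have h2 : t = fun j => gfun ((s j : ℝ) : ℂ) := by
        funext j
        rw [hreflect j, hgdef]
      rwa [h2]
    -- the vanishing sums
    have hvanj : ∀ j, ∑ k ∈ range (D + 1),
        (W.coeff k).eval (a j) * (b j) ^ k = 0 := by
      intro j
      have h0 := hvan (s j) (hnotint j)
      rw [show evab (Complex.Gamma ((s j : ℝ) : ℂ)) (Complex.Gamma (-((s j : ℝ) : ℂ))) W
          = Polynomial.eval₂ (Polynomial.evalRingHom (a j)) (b j) W from rfl,
        Polynomial.eval₂_eq_sum_range] at h0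
      simpa using h0
    set L : ℕ → ℂ := fun j => ∑ k ∈ range (D + 1),
      (W.coeff k).eval (a j) * (t j) ^ (D - k) with hLdef
    have hL0 : ∀ j, L j = 0 := by
      intro j
      have : L j = (∑ k ∈ range (D + 1),
          (W.coeff k).eval (a j) * (b j) ^ k) * (t j) ^ D := by
        rw [Finset.sum_mul]
        apply Finset.sum_congr rfl
        intro k hk
        have hkD : k ≤ D := Nat.lt_succ_iff.mp (Finset.mem_range.mp hk)
        rw [mul_assoc, pow_inv_aux (hbne j) hkD]
      rw [this, hvanj j, zero_mul]
    have hLlim : Tendsto L atTop (𝓝 (w.eval (((m + 2).factorial : ℕ) : ℂ))) := by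
      have hterm : ∀ k ∈ range (D + 1), Tendsto
          (fun j => (W.coeff k).eval (a j) * (t j) ^ (D - k)) atTop
          (𝓝 ((W.coeff k).eval (((m + 2).factorial : ℕ) : ℂ) * (0 : ℂ) ^ (D - k))) := by
        intro k _
        exact (((W.coeff k).continuous_aeval.tendsto _).comp halim).mul (htlim.pow _)
      have hsum := tendsto_finset_sum (range (D + 1)) hterm
      have hvalue : ∑ k ∈ range (D + 1),
          (W.coeff k).eval (((m + 2).factorial : ℕ) : ℂ) * (0 : ℂ) ^ (D - k)
          = w.eval (((m + 2).factorial : ℕ) : ℂ) := by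
        rw [Finset.sum_eq_single D]
        · simp [hw]
        · intro k hk hkne
          have hklt : k < D := lt_of_le_of_ne (Nat.lt_succ_iff.mp (Finset.mem_range.mp hk)) hkne
          rw [zero_pow (Nat.sub_ne_zero_of_lt hklt), mul_zero]
        · intro hD'
          exact absurd (Finset.self_mem_range_succ D) hD'
      rwa [hvalue] at hsum
    exact tendsto_nhds_unique hLlim
      (by rw [show L = fun _ => (0 : ℂ) from funext hL0]; exact tendsto_const_nhds)
  -- infinitely many roots
  have hinf : Set.Infinite {x : ℂ | w.IsRoot x} := by
    apply Set.infinite_of_injective_forall_mem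
      (f := fun m : ℕ => (((m + 2).factorial : ℕ) : ℂ))
    · intro m1 m2 h12
      have : ((m1 + 2).factorial : ℕ) = (m2 + 2).factorial := Nat.cast_injective h12
      have := (Nat.factorial_inj (by omega : 1 < m1 + 2)).mp this
      omega
    · intro m
      exact hroot m
  exact hwne (Polynomial.eq_zero_of_infinite_isRoot w hinf)


end

open MvPolynomial

/-- The image of the `y`-axis under `G` is transcendental: no nonzero real polynomial in two
variables vanishes on the set `{(Re Γ(it), Im Γ(it)) : t ∈ ℝ, t ≠ 0}`. -/
theorem y_axis_image_transcendental :
    ¬ ∃ P : MvPolynomial (Fin 2) ℝ, P ≠ 0 ∧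
      ∀ t : ℝ, t ≠ 0 →
        MvPolynomial.eval
          ![(Complex.Gamma ((t : ℂ) * Complex.I)).re,
            (Complex.Gamma ((t : ℂ) * Complex.I)).im] P = 0 := by
  rintro ⟨P, hP0, hPv⟩
  apply Wof_ne_zero P hP0
  apply W_eq_zero
  intro s hs
  rw [evab_Wof]
  exact key_vanish P hPv s hs
end

section
/- Let r > 0 be a real number and let (m_k)_k, (n_k)_k be sequences of positive integers tending to infinity such that n_k · log(n_k) ∼ r · m_k · log(m_k) as k → ∞ (that is, the ratio of the two sides tends to 1). Then log(n_k) ∼ log(m_k) and n_k ∼ r · m_k as k → ∞. -/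
open Filter

/-- If `r > 0` and `(m_k)`, `(n_k)` are sequences of positive integers tending to infinity
with `n_k log n_k ∼ r m_k log m_k`, then `log n_k ∼ log m_k` and `n_k ∼ r m_k`. -/
theorem asymptotics_from_nlogn (r : ℝ) (hr : 0 < r) (m n : ℕ → ℕ)
    (hm1 : ∀ k, 1 ≤ m k) (hn1 : ∀ k, 1 ≤ n k)
    (hm : Tendsto m atTop atTop) (hn : Tendsto n atTop atTop)
    (h : Tendsto (fun k => ((n k : ℝ) * Real.log (n k)) /
        (r * (m k : ℝ) * Real.log (m k))) atTop (nhds 1)) :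
    Tendsto (fun k => Real.log (n k) / Real.log (m k)) atTop (nhds 1) ∧
    Tendsto (fun k => (n k : ℝ) / (r * (m k : ℝ))) atTop (nhds 1) := by
  set A : ℕ → ℝ := fun k => Real.log (n k) with hA_def
  set B : ℕ → ℝ := fun k => Real.log (m k) with hB_def
  have hncast : Tendsto (fun k => (n k : ℝ)) atTop atTop :=
    tendsto_natCast_atTop_atTop.comp hn
  have hmcast : Tendsto (fun k => (m k : ℝ)) atTop atTop :=
    tendsto_natCast_atTop_atTop.comp hm
  have hA : Tendsto A atTop atTop := Real.tendsto_log_atTop.comp hncast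
  have hB : Tendsto B atTop atTop := Real.tendsto_log_atTop.comp hmcast
  have hA1 : ∀ᶠ k in atTop, 1 ≤ A k := hA.eventually_ge_atTop 1
  have hB1 : ∀ᶠ k in atTop, 1 ≤ B k := hB.eventually_ge_atTop 1
  -- log of the quotient tends to 0
  have hlogf : Tendsto (fun k => Real.log (((n k : ℝ) * A k) / (r * (m k : ℝ) * B k)))
      atTop (nhds 0) := by
    have := (Real.continuousAt_log one_ne_zero).tendsto.comp h
    rw [Real.log_one] at this
    exact this
  have hc : Tendsto (fun k => (A k - B k) + (Real.log (A k) - Real.log (B k)))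
      atTop (nhds (Real.log r)) := by
    have heq : ∀ᶠ k in atTop,
        Real.log (((n k : ℝ) * A k) / (r * (m k : ℝ) * B k)) + Real.log r
        = (A k - B k) + (Real.log (A k) - Real.log (B k)) := by
      filter_upwards [hA1, hB1] with k ha hb
      have hn0 : (0:ℝ) < n k := by exact_mod_cast hn1 k
      have hm0 : (0:ℝ) < m k := by exact_mod_cast hm1 k
      have ha0 : (0:ℝ) < A k := lt_of_lt_of_le one_pos ha
      have hb0 : (0:ℝ) < B k := lt_of_lt_of_le one_pos hb
      rw [Real.log_div (by positivity) (by positivity), Real.log_mul hn0.ne' ha0.ne',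
        Real.log_mul (by positivity) hb0.ne', Real.log_mul hr.ne' hm0.ne']
      ring
    have h2 : Tendsto (fun k => Real.log (((n k:ℝ) * A k) / (r * (m k:ℝ) * B k)) + Real.log r)
        atTop (nhds (0 + Real.log r)) := hlogf.add_const _
    rw [zero_add] at h2
    exact h2.congr' heq
  -- |A - B| is eventually bounded
  have hcb : ∀ᶠ k in atTop,
      |(A k - B k) + (Real.log (A k) - Real.log (B k))| < |Real.log r| + 1 :=
    hc.abs.eventually_lt_const (lt_add_one _)
  have hbound : ∀ᶠ k in atTop, |A k - B k| ≤ |Real.log r| + 1 := by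
    filter_upwards [hA1, hB1, hcb] with k ha hb hck
    have ha0 : (0:ℝ) < A k := lt_of_lt_of_le one_pos ha
    have hb0 : (0:ℝ) < B k := lt_of_lt_of_le one_pos hb
    rcases le_total (B k) (A k) with hle | hle
    · have hlog : Real.log (B k) ≤ Real.log (A k) := Real.log_le_log hb0 hle
      have : A k - B k ≤ (A k - B k) + (Real.log (A k) - Real.log (B k)) := by linarith
      have h3 : A k - B k ≤ |(A k - B k) + (Real.log (A k) - Real.log (B k))| :=
        this.trans (le_abs_self _)
      rw [abs_of_nonneg (by linarith)]
      linarith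
    · have hlog : Real.log (A k) ≤ Real.log (B k) := Real.log_le_log ha0 hle
      have : (A k - B k) + (Real.log (A k) - Real.log (B k)) ≤ A k - B k := by linarith
      have h3 : -((A k - B k) + (Real.log (A k) - Real.log (B k))) ≤
          |(A k - B k) + (Real.log (A k) - Real.log (B k))| := neg_le_abs _
      rw [abs_of_nonpos (by linarith)]
      linarith
  -- (A - B)/B → 0
  have hdiff0 : Tendsto (fun k => (A k - B k) / B k) atTop (nhds 0) := by
    apply squeeze_zero_norm' (a := fun k => (|Real.log r| + 1) / B k)
    · filter_upwards [hB1, hbound] with k hb hbd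
      have hb0 : (0:ℝ) < B k := lt_of_lt_of_le one_pos hb
      rw [Real.norm_eq_abs, abs_div, abs_of_pos hb0]
      exact div_le_div_of_nonneg_right hbd hb0.le
    · exact tendsto_const_nhds.div_atTop hB
  -- first conclusion
  have h1 : Tendsto (fun k => A k / B k) atTop (nhds 1) := by
    have := (tendsto_const_nhds : Tendsto (fun _ : ℕ => (1:ℝ)) atTop (nhds 1)).add hdiff0
    rw [add_zero] at this
    refine this.congr' ?_
    filter_upwards [hB1] with k hb
    have hb0 : (B k) ≠ 0 := by positivity
    field_simp
    ring
  refine ⟨h1, ?_⟩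
  -- second conclusion
  have hBA : Tendsto (fun k => B k / A k) atTop (nhds 1) := by
    have := h1.inv₀ one_ne_zero
    rw [inv_one] at this
    refine this.congr ?_
    intro k
    rw [inv_div]
  have hmul : Tendsto (fun k => (((n k : ℝ) * A k) / (r * (m k : ℝ) * B k)) * (B k / A k))
      atTop (nhds 1) := by
    have := h.mul hBA
    rwa [mul_one] at this
  refine hmul.congr' ?_
  filter_upwards [hA1, hB1] with k ha hb
  have ha0 : (A k) ≠ 0 := by positivity
  have hb0 : (B k) ≠ 0 := by positivity
  have hm0 : ((m k : ℝ)) ≠ 0 := by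
    have : (0:ℝ) < m k := by exact_mod_cast hm1 k
    exact this.ne'
  field_simp
end

section
/- There exist infinitely many real numbers t > 0 with Im Γ(it) = 0; that is, the image of the y-axis under G intersects the x-axis infinitely many times. -/
open Set

open Real Filter Finset Complex Topology

lemma arctan_cubic_bound {x : ℝ} (hx : 0 ≤ x) :
    0 ≤ x - Real.arctan x ∧ x - Real.arctan x ≤ x ^ 3 := by
  constructor
  · have mono : MonotoneOn (fun z : ℝ => z - Real.arctan z) Set.univ := by
      apply monotoneOn_of_deriv_nonneg convex_univ
        (continuous_id.sub Real.continuous_arctan).continuousOn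
        (fun z _ => ((differentiable_id z).sub (Real.differentiable_arctan z)).differentiableWithinAt)
      intro z _
      have hd : HasDerivAt (fun z : ℝ => z - Real.arctan z) (1 - 1 / (1 + z ^ 2)) z :=
        (hasDerivAt_id z).sub (Real.hasDerivAt_arctan z)
      show 0 ≤ deriv (fun z : ℝ => z - Real.arctan z) z
      rw [hd.deriv]
      have h1 : (0:ℝ) < 1 + z ^ 2 := by positivity
      rw [sub_nonneg, div_le_one h1]; nlinarith
    have := mono (Set.mem_univ 0) (Set.mem_univ x) hx
    simpa using this
  · have mono : MonotoneOn (fun z : ℝ => z ^ 3 - (z - Real.arctan z)) Set.univ := by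
      apply monotoneOn_of_deriv_nonneg convex_univ
        ((continuous_pow 3).sub (continuous_id.sub Real.continuous_arctan)).continuousOn
        (fun z _ => (((differentiable_pow 3) z).sub
          ((differentiable_id z).sub (Real.differentiable_arctan z))).differentiableWithinAt)
      intro z _
      have hd : HasDerivAt (fun z : ℝ => z ^ 3 - (z - Real.arctan z))
          ((3:ℕ) * z ^ 2 - (1 - 1 / (1 + z ^ 2))) z := by
        exact (hasDerivAt_pow 3 z).sub ((hasDerivAt_id' z).sub (Real.hasDerivAt_arctan z))
      show 0 ≤ deriv (fun z : ℝ => z ^ 3 - (z - Real.arctan z)) z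
      rw [hd.deriv]
      have h1 : (0:ℝ) < 1 + z ^ 2 := by positivity
      have h2 : 1 - 1 / (1 + z ^ 2) ≤ z ^ 2 := by
        have : (1:ℝ) - z ^ 2 ≤ 1 / (1 + z ^ 2) := by
          rw [le_div_iff₀ h1]; nlinarith
        linarith
      push_cast; nlinarith
    have := mono (Set.mem_univ 0) (Set.mem_univ x) hx
    simpa using this

lemma factor_eq (s : ℝ) :
    (1 : ℂ) + (s : ℂ) * Complex.I
      = (Real.sqrt (1 + s ^ 2) : ℂ) * Complex.exp ((Real.arctan s : ℂ) * Complex.I) := by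
  have h0 : Real.sqrt (1 + s ^ 2) ≠ 0 := by positivity
  have hsq : Real.sqrt (1 + s ^ 2) ^ 2 = 1 + s ^ 2 := Real.sq_sqrt (by positivity)
  rw [Complex.exp_mul_I]
  rw [show Complex.cos (Real.arctan s : ℂ) = ((Real.cos (Real.arctan s) : ℝ) : ℂ) by
        rw [Complex.ofReal_cos],
      show Complex.sin (Real.arctan s : ℂ) = ((Real.sin (Real.arctan s) : ℝ) : ℂ) by
        rw [Complex.ofReal_sin]]
  rw [Real.cos_arctan, Real.sin_arctan]
  apply Complex.ext
  · simp [Complex.mul_re, Complex.mul_im]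
    field_simp
  · simp [Complex.mul_re, Complex.mul_im]
    field_simp

lemma abs_sub_arctan_le (x : ℝ) : |x - Real.arctan x| ≤ |x| ^ 3 := by
  rcases le_or_gt 0 x with hx | hx
  · rw [_root_.abs_of_nonneg (arctan_cubic_bound hx).1, _root_.abs_of_nonneg hx]
    exact (arctan_cubic_bound hx).2
  · have hy : (0:ℝ) ≤ -x := by linarith
    have : x - Real.arctan x = -((-x) - Real.arctan (-x)) := by
      rw [Real.arctan_neg]; ring
    rw [this, abs_neg, _root_.abs_of_nonneg (arctan_cubic_bound hy).1, abs_of_neg hx]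
    exact (arctan_cubic_bound hy).2

lemma summable_inv_cube : Summable (fun k : ℕ => 1 / ((k : ℝ) + 1) ^ 3) := by
  have h : Summable (fun n : ℕ => 1 / (n : ℝ) ^ 3) :=
    Real.summable_one_div_nat_pow.mpr (by norm_num)
  have := (summable_nat_add_iff 1).mpr h
  simpa using this

lemma summable_g (t : ℝ) :
    Summable (fun k : ℕ => t / (k + 1) - Real.arctan (t / (k + 1))) := by
  apply Summable.of_norm_bounded (summable_inv_cube.mul_left (|t| ^ 3))
  intro k
  have hk : (0:ℝ) < (k : ℝ) + 1 := by positivity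
  calc ‖t / (k + 1) - Real.arctan (t / (k + 1))‖ ≤ |t / ((k:ℝ) + 1)| ^ 3 :=
        abs_sub_arctan_le _
    _ = |t| ^ 3 * (1 / ((k:ℝ) + 1) ^ 3) := by
        rw [abs_div, abs_of_pos hk]; field_simp
    _ ≤ _ := le_refl _

noncomputable def thetaN (t : ℝ) (n : ℕ) : ℝ :=
  t * Real.log n - ∑ j ∈ Finset.range (n + 1), Real.arctan (t / (j + 1))

noncomputable def phi (t : ℝ) : ℝ :=
  -(Real.eulerMascheroniConstant * t)
    + ∑' k : ℕ, (t / (k + 1) - Real.arctan (t / (k + 1)))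

lemma harmonic_real (n : ℕ) :
    ((harmonic n : ℚ) : ℝ) = ∑ j ∈ Finset.range n, 1 / ((j : ℝ) + 1) := by
  rw [harmonic]
  push_cast
  simp [one_div]

lemma theta_tendsto (t : ℝ) : Tendsto (thetaN t) atTop (𝓝 (phi t)) := by
  have hsum := summable_g t
  have h1 : Tendsto (fun n : ℕ => ∑ j ∈ Finset.range (n+1),
      (t / (j + 1) - Real.arctan (t / (j + 1)))) atTop
      (𝓝 (∑' k : ℕ, (t / (k + 1) - Real.arctan (t / (k + 1))))) :=
    hsum.hasSum.tendsto_sum_nat.comp (tendsto_add_atTop_nat 1)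
  have h2 : Tendsto (fun n : ℕ => t * (Real.log n - ∑ j ∈ Finset.range (n+1), 1/((j:ℝ)+1)))
      atTop (𝓝 (-(Real.eulerMascheroniConstant * t))) := by
    have hh : Tendsto (fun n : ℕ => ((harmonic n : ℚ) : ℝ) - Real.log n) atTop
        (𝓝 Real.eulerMascheroniConstant) := Real.tendsto_harmonic_sub_log
    have hz : Tendsto (fun n : ℕ => 1/((n:ℝ)+1)) atTop (𝓝 0) :=
      tendsto_one_div_add_atTop_nhds_zero_nat
    have := ((hh.add hz).neg).const_mul t
    simp only [add_zero, mul_neg] at this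
    rw [show -(Real.eulerMascheroniConstant * t) = -(t * Real.eulerMascheroniConstant) by ring]
    apply this.congr
    intro n
    rw [harmonic_real, Finset.sum_range_succ]
    push_cast
    ring
  have key := h2.add h1
  have : -(Real.eulerMascheroniConstant * t)
      + ∑' k : ℕ, (t / (k + 1) - Real.arctan (t / (k + 1))) = phi t := rfl
  rw [this] at key
  apply key.congr
  intro n
  rw [thetaN, Finset.sum_sub_distrib]
  rw [show ∑ j ∈ Finset.range (n+1), t/((j:ℝ)+1)
      = t * ∑ j ∈ Finset.range (n+1), 1/((j:ℝ)+1) by rw [Finset.mul_sum]; congr 1; ext j; ring]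
  ring

lemma gammaSeq_factor (t : ℝ) {n : ℕ} (hn : 1 ≤ n) :
    ∃ A : ℝ, Complex.GammaSeq (1 + t * Complex.I) n
      * Complex.exp (-((thetaN t n : ℝ) : ℂ) * Complex.I) = (A : ℂ) := by
  have hn0 : (n : ℂ) ≠ 0 := Nat.cast_ne_zero.mpr (by omega)
  have hnR : (0:ℝ) < n := by exact_mod_cast Nat.pos_of_ne_zero (by omega)
  -- numerator
  have hnum : (n : ℂ) ^ ((1:ℂ) + t * Complex.I)
      = (n : ℂ) * Complex.exp (((t * Real.log n : ℝ) : ℂ) * Complex.I) := by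
    rw [Complex.cpow_def_of_ne_zero hn0]
    have hlog : Complex.log (n : ℂ) = ((Real.log n : ℝ) : ℂ) := by
      rw [show ((n:ℕ):ℂ) = (((n:ℝ)):ℂ) by push_cast; ring, ← Complex.ofReal_log hnR.le]
    rw [hlog, mul_add, mul_one, Complex.exp_add]
    congr 1
    · rw [← Complex.ofReal_exp, Real.exp_log hnR]; norm_cast
    · congr 1; push_cast; ring
  -- denominator factors
  have hfac : ∀ j ∈ Finset.range (n + 1), ((1:ℂ) + t * Complex.I + j)
      = ((((j:ℝ)+1) * Real.sqrt (1 + (t/((j:ℝ)+1)) ^ 2) : ℝ) : ℂ)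
        * Complex.exp (((Real.arctan (t/((j:ℝ)+1)) : ℝ) : ℂ) * Complex.I) := by
    intro j _
    have hj : (0:ℝ) < (j:ℝ) + 1 := by positivity
    have h1 : ((1:ℂ) + t * Complex.I + j)
        = (((j:ℝ)+1 : ℝ) : ℂ) * ((1:ℂ) + ((t/((j:ℝ)+1) : ℝ) : ℂ) * Complex.I) := by
      have hne : ((j:ℂ)+1) ≠ 0 := Nat.cast_add_one_ne_zero j
      push_cast
      field_simp
      ring
    rw [h1, factor_eq (t/((j:ℝ)+1)), ← mul_assoc, ← Complex.ofReal_mul]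
  have hden : ∏ j ∈ Finset.range (n+1), ((1:ℂ) + t * Complex.I + j)
      = ((∏ j ∈ Finset.range (n+1), (((j:ℝ)+1) * Real.sqrt (1 + (t/((j:ℝ)+1)) ^ 2)) : ℝ) : ℂ)
        * Complex.exp (((∑ j ∈ Finset.range (n+1), Real.arctan (t/((j:ℝ)+1)) : ℝ) : ℂ)
            * Complex.I) := by
    rw [Finset.prod_congr rfl hfac, Finset.prod_mul_distrib, Complex.ofReal_prod,
      ← Complex.exp_sum]
    congr 1
    rw [Complex.ofReal_sum, Finset.sum_mul]
  set P : ℝ := ∏ j ∈ Finset.range (n+1), (((j:ℝ)+1) * Real.sqrt (1 + (t/((j:ℝ)+1)) ^ 2)) with hP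
  have hP0 : P ≠ 0 := by
    apply Finset.prod_ne_zero_iff.mpr
    intro j _
    positivity
  refine ⟨(n : ℝ) * ((Nat.factorial n : ℕ) : ℝ) / P, ?_⟩
  have hPC : (P : ℂ) ≠ 0 := Complex.ofReal_ne_zero.mpr hP0
  have hc : Complex.exp (((t * Real.log n : ℝ) : ℂ) * Complex.I)
      * Complex.exp (-((thetaN t n : ℝ) : ℂ) * Complex.I)
      = Complex.exp (((∑ j ∈ Finset.range (n+1), Real.arctan (t/((j:ℝ)+1)) : ℝ) : ℂ)
          * Complex.I) := by
    rw [← Complex.exp_add]; congr 1; push_cast [thetaN]; ring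
  rw [Complex.GammaSeq, hnum, hden, div_mul_eq_mul_div,
    div_eq_iff (mul_ne_zero hPC (Complex.exp_ne_zero _)), ← hc]
  push_cast
  field_simp

lemma gamma_re (t : ℝ) :
    ∃ c : ℝ, (Complex.Gamma (1 + t * Complex.I)).re = c * Real.cos (phi t) := by
  set L := Complex.Gamma (1 + t * Complex.I) * Complex.exp (-((phi t : ℝ) : ℂ) * Complex.I)
    with hLdef
  have hθ : Tendsto (fun n => (-((thetaN t n : ℝ) : ℂ) * Complex.I)) atTop
      (𝓝 (-((phi t : ℝ) : ℂ) * Complex.I)) := by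
    have h0 := (Complex.continuous_ofReal.tendsto (phi t)).comp (theta_tendsto t)
    exact (h0.neg).mul_const Complex.I
  have hlim : Tendsto (fun n => Complex.GammaSeq (1 + t * Complex.I) n
      * Complex.exp (-((thetaN t n : ℝ) : ℂ) * Complex.I)) atTop (𝓝 L) :=
    (Complex.GammaSeq_tendsto_Gamma _).mul hθ.cexp
  have him : L.im = 0 := by
    have h1 : Tendsto (fun n => (Complex.GammaSeq (1 + t * Complex.I) n
        * Complex.exp (-((thetaN t n : ℝ) : ℂ) * Complex.I)).im) atTop (𝓝 L.im) :=
      (Complex.continuous_im.tendsto L).comp hlim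
    have h2 : (fun n => (Complex.GammaSeq (1 + t * Complex.I) n
        * Complex.exp (-((thetaN t n : ℝ) : ℂ) * Complex.I)).im) =ᶠ[atTop]
        (fun _ => (0:ℝ)) := by
      filter_upwards [eventually_ge_atTop 1] with n hn
      obtain ⟨A, hA⟩ := gammaSeq_factor t hn
      rw [hA, Complex.ofReal_im]
    exact tendsto_nhds_unique (h1.congr' h2) tendsto_const_nhds
  refine ⟨L.re, ?_⟩
  have hΓ : Complex.Gamma (1 + t * Complex.I)
      = L * Complex.exp (((phi t : ℝ) : ℂ) * Complex.I) := by
    rw [hLdef, mul_assoc, ← Complex.exp_add]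
    simp
  rw [hΓ, Complex.mul_re, him, Complex.exp_ofReal_mul_I_re]
  simp

lemma phi_contOn (M : ℝ) : ContinuousOn phi (Set.Icc 0 M) := by
  apply ContinuousOn.add
  · exact ((continuous_const.mul continuous_id).neg).continuousOn
  · apply continuousOn_tsum (u := fun k : ℕ => |M| ^ 3 * (1 / ((k:ℝ)+1) ^ 3))
    · intro k
      exact (Continuous.continuousOn (by continuity))
    · exact summable_inv_cube.mul_left _
    · intro k x hx
      have hxM : |x| ≤ |M| := by
        rw [_root_.abs_of_nonneg hx.1]
        exact le_trans hx.2 (le_abs_self M)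
      have hk : (0:ℝ) < (k:ℝ) + 1 := by positivity
      calc ‖x / (k + 1) - Real.arctan (x / (k + 1))‖ ≤ |x / ((k:ℝ)+1)| ^ 3 :=
            abs_sub_arctan_le _
        _ = |x| ^ 3 * (1 / ((k:ℝ)+1) ^ 3) := by
            rw [abs_div, abs_of_pos hk]; field_simp
        _ ≤ |M| ^ 3 * (1 / ((k:ℝ)+1) ^ 3) := by
            apply mul_le_mul_of_nonneg_right _ (by positivity)
            exact pow_le_pow_left₀ (abs_nonneg x) hxM 3

lemma phi_zero : phi 0 = 0 := by
  simp [phi]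

lemma phi_unbounded : ∀ y : ℝ, ∃ M : ℝ, 0 < M ∧ y ≤ phi M := by
  obtain ⟨N, hN⟩ : ∃ N : ℕ, Real.eulerMascheroniConstant + 1
      ≤ ∑ i ∈ Finset.range N, 1 / ((i:ℝ) + 1) := by
    have := tendsto_sum_range_one_div_nat_succ_atTop
    rw [tendsto_atTop] at this
    exact ((this _).exists)
  intro y
  refine ⟨max 1 (y + N * (π/2)), lt_of_lt_of_le one_pos (le_max_left _ _), ?_⟩
  set M := max 1 (y + N * (π/2)) with hM
  have hM0 : (0:ℝ) ≤ M := le_trans zero_le_one (le_max_left _ _)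
  have hbound : M - N * (π/2) ≤ phi M := by
    have hsum := summable_g M
    have hge : ∑ j ∈ Finset.range N, (M / (j + 1) - Real.arctan (M / (j + 1)))
        ≤ ∑' k : ℕ, (M / (k + 1) - Real.arctan (M / (k + 1))) := by
      apply hsum.sum_le_tsum
      intro k _
      exact (arctan_cubic_bound (by positivity : (0:ℝ) ≤ M / (k+1))).1
    have hlow : M * (∑ i ∈ Finset.range N, 1 / ((i:ℝ) + 1)) - N * (π/2)
        ≤ ∑ j ∈ Finset.range N, (M / (j + 1) - Real.arctan (M / (j + 1))) := by
      rw [Finset.mul_sum]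
      have : (N : ℝ) * (π/2) = ∑ _j ∈ Finset.range N, (π/2) := by
        rw [Finset.sum_const, Finset.card_range, nsmul_eq_mul]
      rw [this, ← Finset.sum_sub_distrib]
      apply Finset.sum_le_sum
      intro j _
      have := Real.arctan_lt_pi_div_two (M / (j+1))
      have : Real.arctan (M / (j+1)) ≤ π/2 := le_of_lt this
      rw [show M * (1 / ((j:ℝ)+1)) = M / ((j:ℝ)+1) by ring]
      linarith
    have hγ : Real.eulerMascheroniConstant + 1 ≤ ∑ i ∈ Finset.range N, 1 / ((i:ℝ) + 1) := hN
    have : M * (Real.eulerMascheroniConstant + 1)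
        ≤ M * ∑ i ∈ Finset.range N, 1 / ((i:ℝ) + 1) :=
      mul_le_mul_of_nonneg_left hγ hM0
    rw [phi]
    nlinarith [hge, hlow]
  have : y + N * (π/2) ≤ M := le_max_right _ _
  linarith

/-- There are infinitely many `t > 0` with `Im Γ(it) = 0`: the image of the `y`-axis under
`G` intersects the `x`-axis infinitely many times. -/
theorem infinitely_many_real_values_on_imaginary_axis :
    {t : ℝ | 0 < t ∧ (Complex.Gamma ((t : ℂ) * Complex.I)).im = 0}.Infinite := by
  have key : ∀ k : ℕ, ∃ t : ℝ, 0 < t ∧ phi t = π/2 + k * π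
      ∧ (Complex.Gamma ((t:ℂ) * Complex.I)).im = 0 := by
    intro k
    have hy : (0:ℝ) < π/2 + k * π := by positivity
    obtain ⟨M, hM0, hMy⟩ := phi_unbounded (π/2 + k * π)
    have hIcc : (π/2 + (k:ℝ)*π) ∈ Set.Icc (phi 0) (phi M) := by
      rw [phi_zero]; exact ⟨hy.le, hMy⟩
    obtain ⟨t, htmem, htval⟩ := intermediate_value_Icc hM0.le (phi_contOn M) hIcc
    have ht0 : 0 < t := by
      rcases lt_or_eq_of_le htmem.1 with h | h
      · exact h
      · exfalso
        rw [← h, phi_zero] at htval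
        linarith
    refine ⟨t, ht0, htval, ?_⟩
    obtain ⟨c, hc⟩ := gamma_re t
    have hcos : Real.cos (phi t) = 0 := by
      rw [htval, show π/2 + (k:ℝ)*π = (k:ℝ)*π + π/2 by ring, Real.cos_add_pi_div_two,
        Real.sin_nat_mul_pi, neg_zero]
    have hre : (Complex.Gamma (1 + (t:ℂ) * Complex.I)).re = 0 := by rw [hc, hcos, mul_zero]
    have htne : ((t:ℂ) * Complex.I) ≠ 0 :=
      mul_ne_zero (Complex.ofReal_ne_zero.mpr ht0.ne') Complex.I_ne_zero
    have hrec := Complex.Gamma_add_one ((t:ℂ) * Complex.I) htne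
    have hG : Complex.Gamma ((t:ℂ)*Complex.I)
        = Complex.Gamma ((t:ℂ)*Complex.I + 1) / ((t:ℂ)*Complex.I) := by
      rw [hrec]
      rw [mul_div_cancel_left₀ _ htne]
    rw [hG, Complex.div_im]
    have h1 : ((t:ℂ)*Complex.I).re = 0 := by simp
    have h2 : (Complex.Gamma ((t:ℂ)*Complex.I + 1)).re = 0 := by
      rw [show (t:ℂ)*Complex.I + 1 = 1 + (t:ℂ)*Complex.I by ring]
      exact hre
    rw [h1, h2]
    simp
  choose f hf using key
  apply Set.infinite_of_injective_forall_mem (f := f)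
  · intro k1 k2 hk
    have e1 := (hf k1).2.1
    have e2 := (hf k2).2.1
    rw [hk] at e1
    rw [e2] at e1
    have : (k1:ℝ) * π = (k2:ℝ) * π := by linarith
    have := mul_right_cancel₀ Real.pi_ne_zero this
    exact_mod_cast this
  · intro k
    exact ⟨(hf k).1, (hf k).2.2⟩
end
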